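/- arXiv:1904.01511 — 7 statements merged into one kernel-verified Lean document; each statement's English description precedes it below -/
import Mathlib

section
/- Let Δ ⊂ ℝ² be a full-dimensional lattice polygon with |Δ ∩ ℤ²| ≥ 6. Then the following are equivalent: (1) lw(Δ) = 1; (2) there exist a nonzero vector v ∈ ℂ² and a polynomial g ∈ ℂ[x,y] of total degree ≤ 1 such that (v₁x+v₂y)² + g(x,y) vanishes at every point of Δ ∩ ℤ². -/
open MvPolynomial

/-- The canonical embedding of `ℤ^k` into `ℝ^k`. -/
def castR {k : ℕ} (p : Fin k → ℤ) : Fin k → ℝ := fun i => (p i : ℝ)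

/-- The lattice width of `Δ ⊆ ℝ^k` in the direction `v ∈ ℤ^k`:
`lw_v(Δ) = max_{x ∈ Δ} ⟨x,v⟩ - min_{x ∈ Δ} ⟨x,v⟩`. -/
noncomputable def lwv (k : ℕ) (Δ : Set (Fin k → ℝ)) (v : Fin k → ℤ) : ℝ :=
  sSup ((fun x : Fin k → ℝ => ∑ i, x i * (v i : ℝ)) '' Δ) -
    sInf ((fun x : Fin k → ℝ => ∑ i, x i * (v i : ℝ)) '' Δ)

/-- The lattice width of `Δ ⊆ ℝ^k`: the minimum of `lw_v(Δ)` over nonzero `v ∈ ℤ^k`. -/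
noncomputable def lw (k : ℕ) (Δ : Set (Fin k → ℝ)) : ℝ :=
  sInf {w : ℝ | ∃ v : Fin k → ℤ, v ≠ 0 ∧ w = lwv k Δ v}

/-!
If `lw(Δ) = 1` in a direction `v`, every lattice point `p` of `Δ` has `⟨p, v⟩ ∈ {m, m + 1}`, so
`(⟨p, v⟩ - m) (⟨p, v⟩ - m - 1) = 0` is the required parabola.

Conversely, among five lattice points two are congruent mod `2`, so `Δ` contains lattice points
`x, x + e, x + 2e` with `e` primitive. A quadratic `(v·p)² + g(p)` vanishing at these three points
has `v` and the linear part of `g` orthogonal to `e`, so on lattice points it is a nonzero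
quadratic polynomial in the level `ℓ(p) = det(e, p)`, which therefore takes at most two values.
The level of `x` and `x + e` is one of them; if the other one were at distance `D ≥ 2`, the
triangle spanned by `x`, `x + e` and a point on that level would contain a lattice point on an
intermediate level. Hence `lw_ℓ(Δ) = 1`, while non-collinearity gives `lw(Δ) ≥ 1`.
-/

namespace MvPolynomial

variable {σ R : Type*} [Fintype σ] [CommSemiring R]

theorem totalDegree_C_add_sum_C_mul_X_le_one (a : R) (b : σ → R) :
    (C a + ∑ i, C (b i) * X i : MvPolynomial σ R).totalDegree ≤ 1 := by
  refine (totalDegree_add _ _).trans (max_le (by simp) (totalDegree_finsetSum_le fun i _ => ?_))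
  rw [C_mul_X_eq_monomial]
  exact (totalDegree_monomial_le _ _).trans (by simp)

theorem eval_C_add_sum_C_mul_X (a : R) (b x : σ → R) :
    eval x (C a + ∑ i, C (b i) * X i) = a + b ⬝ᵥ x := by
  simp [dotProduct]

theorem eq_C_add_sum_C_mul_X_of_totalDegree_le_one [DecidableEq σ] {g : MvPolynomial σ R}
    (hg : g.totalDegree ≤ 1) :
    g = C (coeff 0 g) + ∑ i, C (coeff (Finsupp.single i 1) g) * X i := by
  ext d
  simp only [coeff_add, coeff_C, coeff_sum, coeff_C_mul, coeff_X, mul_ite, mul_one, mul_zero]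
  by_cases hd₀ : d = 0
  · subst hd₀
    simp
  obtain ⟨i, rfl⟩ | hd₁ := em (∃ i, d = Finsupp.single i 1)
  · simp [Finsupp.single_left_inj, Ne.symm hd₀]
  have hcoeff : coeff d g = 0 := by
    by_contra h
    rcases Nat.le_one_iff_eq_zero_or_eq_one.mp ((le_totalDegree (mem_support_iff.mpr h)).trans hg)
      with h₀ | h₁
    · exact hd₀ ((Finsupp.degree_eq_zero_iff d).mp h₀)
    · exact hd₁ ((Finsupp.sum_eq_one_iff d).mp h₁)
  rw [hcoeff, if_neg (Ne.symm hd₀), zero_add, Finset.sum_eq_zero]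
  exact fun i _ => if_neg fun h => hd₁ ⟨i, h.symm⟩

theorem exists_eval_eq_add_dotProduct_of_totalDegree_le_one {g : MvPolynomial σ R}
    (hg : g.totalDegree ≤ 1) : ∃ (a : R) (b : σ → R), ∀ x, eval x g = a + b ⬝ᵥ x := by
  classical
  refine ⟨coeff 0 g, fun i => coeff (Finsupp.single i 1) g, fun x => ?_⟩
  rw [← eval_C_add_sum_C_mul_X, ← eq_C_add_sum_C_mul_X_of_totalDegree_le_one hg]

end MvPolynomial

namespace LatticePolygon

section Algebra

variable {R : Type*} [CommRing R]

theorem dotProduct_eq_zero_of_vanishing_on_progression [NoZeroDivisors R] [NeZero (2 : R)]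
    {ι : Type*} [Fintype ι] {v b x w : ι → R} {a : R}
    (h₀ : (v ⬝ᵥ x) ^ 2 + (a + b ⬝ᵥ x) = 0)
    (h₁ : (v ⬝ᵥ (x + w)) ^ 2 + (a + b ⬝ᵥ (x + w)) = 0)
    (h₂ : (v ⬝ᵥ (x + 2 • w)) ^ 2 + (a + b ⬝ᵥ (x + 2 • w)) = 0) :
    v ⬝ᵥ w = 0 ∧ b ⬝ᵥ w = 0 := by
  simp only [dotProduct_add, dotProduct_smul] at h₁ h₂
  have hv : v ⬝ᵥ w = 0 := by
    have : 2 * (v ⬝ᵥ w) ^ 2 = 0 := by linear_combination h₀ - 2 * h₁ + h₂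
    simpa [two_ne_zero] using this
  exact ⟨hv, by linear_combination h₁ - h₀ - (2 * v ⬝ᵥ x + v ⬝ᵥ w) * hv⟩

theorem eq_or_eq_or_eq_of_quadratic_eq_zero [NoZeroDivisors R] {c d a x y z : R} (hc : c ≠ 0)
    (hx : c * x ^ 2 + d * x + a = 0) (hy : c * y ^ 2 + d * y + a = 0)
    (hz : c * z ^ 2 + d * z + a = 0) : x = y ∨ x = z ∨ y = z := by
  by_contra! h
  obtain ⟨hxy, hxz, hyz⟩ := h
  have hxy' : c * (x + y) + d = 0 := by
    refine (mul_eq_zero.mp ?_).resolve_left (sub_ne_zero.mpr hxy)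
    linear_combination hx - hy
  have hxz' : c * (x + z) + d = 0 := by
    refine (mul_eq_zero.mp ?_).resolve_left (sub_ne_zero.mpr hxz)
    linear_combination hx - hz
  exact mul_ne_zero hc (sub_ne_zero.mpr hyz) (by linear_combination hxy' - hxz')

/-- `p ⬝ᵥ perp e = det(e, p)`. -/
def perp {α : Type*} [Neg α] (e : Fin 2 → α) : Fin 2 → α := ![-e 1, e 0]

@[simp]
theorem perp_apply_zero {α : Type*} [Neg α] (e : Fin 2 → α) : perp e 0 = -e 1 := rfl

@[simp]
theorem perp_apply_one {α : Type*} [Neg α] (e : Fin 2 → α) : perp e 1 = e 0 := rfl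

@[simp]
theorem dotProduct_perp_self (e : Fin 2 → R) : e ⬝ᵥ perp e = 0 := by
  rw [dotProduct, Fin.sum_univ_two, perp_apply_zero, perp_apply_one]
  ring

theorem perp_eq_zero_iff {e : Fin 2 → R} : perp e = 0 ↔ e = 0 := by
  simp [funext_iff, Fin.forall_fin_two, and_comm]

theorem eq_smul_add_smul_of_dotProduct_perp_eq_one {e z : Fin 2 → R} (h : z ⬝ᵥ perp e = 1)
    (q : Fin 2 → R) : q = (z ⬝ᵥ perp q) • e + (q ⬝ᵥ perp e) • z := by
  simp only [dotProduct, Fin.sum_univ_two, perp_apply_zero, perp_apply_one] at h ⊢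
  refine funext (Fin.forall_fin_two.mpr ⟨?_, ?_⟩) <;>
    simp only [Pi.add_apply, Pi.smul_apply, smul_eq_mul] <;> linear_combination (-q _) * h

theorem exists_dotProduct_perp_eq_one {e : Fin 2 → R} (he : IsCoprime (e 0) (e 1)) :
    ∃ z : Fin 2 → R, z ⬝ᵥ perp e = 1 := by
  obtain ⟨u, w, huw⟩ := he
  refine ⟨![-w, u], ?_⟩
  simp only [dotProduct, Fin.sum_univ_two, perp_apply_zero, perp_apply_one,
    Matrix.cons_val_zero, Matrix.cons_val_one, Matrix.cons_val_fin_one]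
  linear_combination huw

variable {K : Type*} [Field K]

theorem exists_eq_smul_perp_of_dotProduct_eq_zero {a e : Fin 2 → K} (he : e ≠ 0)
    (h : a ⬝ᵥ e = 0) : ∃ c : K, a = c • perp e := by
  rw [dotProduct, Fin.sum_univ_two] at h
  by_cases h₀ : e 0 = 0
  · have h₁ : e 1 ≠ 0 := fun h₁ => he (funext (Fin.forall_fin_two.mpr ⟨h₀, h₁⟩))
    refine ⟨-(a 0 / e 1), funext (Fin.forall_fin_two.mpr ⟨?_, ?_⟩)⟩ <;>
      simp only [Pi.smul_apply, smul_eq_mul, perp_apply_zero, perp_apply_one]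
    · field_simp
    · simpa [h₀, h₁] using h
  · refine ⟨a 1 / e 0, funext (Fin.forall_fin_two.mpr ⟨?_, ?_⟩)⟩ <;>
      simp only [Pi.smul_apply, smul_eq_mul, perp_apply_zero, perp_apply_one] <;> field_simp
    linear_combination h

theorem dotProduct_perp_eq_or_of_vanishing_quadratic [CharZero K]
    {S : Set (Fin 2 → ℤ)} {v b : Fin 2 → K} {a : K} (hv : v ≠ 0)
    (hQ : ∀ p ∈ S, (v ⬝ᵥ (Int.cast ∘ p)) ^ 2 + (a + b ⬝ᵥ (Int.cast ∘ p)) = 0)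
    {x e : Fin 2 → ℤ} (he : e ≠ 0) (hx : x ∈ S) (hxe : x + e ∈ S) (hx2e : x + (2 : ℤ) • e ∈ S)
    {p q r : Fin 2 → ℤ} (hp : p ∈ S) (hq : q ∈ S) (hr : r ∈ S) :
    p ⬝ᵥ perp e = q ⬝ᵥ perp e ∨ p ⬝ᵥ perp e = r ⬝ᵥ perp e ∨ q ⬝ᵥ perp e = r ⬝ᵥ perp e := by
  have hcast₁ : (Int.cast ∘ (x + e) : Fin 2 → K) = Int.cast ∘ x + Int.cast ∘ e := by
    ext; simp
  have hcast₂ : (Int.cast ∘ (x + (2 : ℤ) • e) : Fin 2 → K) = Int.cast ∘ x + 2 • Int.cast ∘ e := by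
    ext; simp [two_smul]
  obtain ⟨hve, hbe⟩ := dotProduct_eq_zero_of_vanishing_on_progression (hQ x hx)
    (hcast₁ ▸ hQ _ hxe) (hcast₂ ▸ hQ _ hx2e)
  have heK : (Int.cast ∘ e : Fin 2 → K) ≠ 0 := fun h => he (by ext i; simpa using congrFun h i)
  obtain ⟨c, rfl⟩ := exists_eq_smul_perp_of_dotProduct_eq_zero heK hve
  obtain ⟨d, rfl⟩ := exists_eq_smul_perp_of_dotProduct_eq_zero heK hbe
  have hc : c ≠ 0 := by
    rintro rfl
    simp at hv
  have hlevel (s : Fin 2 → ℤ) (hs : s ∈ S) :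
      c ^ 2 * ((s ⬝ᵥ perp e : ℤ) : K) ^ 2 + d * ((s ⬝ᵥ perp e : ℤ) : K) + a = 0 := by
    have hperp : perp (Int.cast ∘ e) ⬝ᵥ Int.cast ∘ s = ((s ⬝ᵥ perp e : ℤ) : K) := by
      simp only [dotProduct, Fin.sum_univ_two, perp_apply_zero, perp_apply_one, Function.comp_apply]
      push_cast
      ring
    rw [← hQ s hs, smul_dotProduct, smul_dotProduct, hperp]
    ring
  exact_mod_cast eq_or_eq_or_eq_of_quadratic_eq_zero (pow_ne_zero 2 hc)
    (hlevel p hp) (hlevel q hq) (hlevel r hr)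

end Algebra

section LatticePoints

variable {k : ℕ}

@[simp]
theorem castR_add (p q : Fin k → ℤ) : castR (p + q) = castR p + castR q := by
  ext i; simp [castR]

@[simp]
theorem castR_smul (n : ℤ) (p : Fin k → ℤ) : castR (n • p) = (n : ℝ) • castR p := by
  ext i; simp [castR]

theorem exists_add_two_smul_mem_of_two_pow_lt_ncard {S : Set (Fin k → ℤ)} (hS : 2 ^ k < S.ncard) :
    ∃ x ∈ S, ∃ w ≠ 0, x + (2 : ℤ) • w ∈ S := by
  obtain ⟨x, hx, y, hy, hxy, hpar⟩ := Set.exists_ne_map_eq_of_ncard_lt_of_maps_to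
    (t := Set.univ) (f := fun (p : Fin k → ℤ) (i : Fin k) => (p i : ZMod 2)) (by simpa using hS)
    (fun _ _ => trivial)
  have hdvd (i : Fin k) : (2 : ℤ) ∣ y i - x i :=
    (ZMod.intCast_eq_intCast_iff_dvd_sub _ _ 2).mp (congrFun hpar i)
  choose w hw using hdvd
  have hy' : y = x + (2 : ℤ) • w := by ext i; simp [← hw i]
  refine ⟨x, hx, w, fun hw₀ => hxy ?_, hy' ▸ hy⟩
  simp [hy', hw₀]

variable {Δ : Set (Fin k → ℝ)}

theorem castR_add_smul_mem (hΔ : Convex ℝ Δ) {x w : Fin k → ℤ} {j m : ℤ}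
    (hx : castR x ∈ Δ) (hm : castR (x + m • w) ∈ Δ) (hj₀ : 0 ≤ j) (hjm : j ≤ m) :
    castR (x + j • w) ∈ Δ := by
  rcases hj₀.eq_or_lt with rfl | hj
  · simpa using hx
  have hm₀ : (0 : ℝ) < m := by exact_mod_cast hj.trans_le hjm
  rw [castR_add, castR_smul] at hm
  have := hΔ.add_smul_mem hx hm (t := (j : ℝ) / m)
    ⟨div_nonneg (by exact_mod_cast hj₀) hm₀.le, (div_le_one hm₀).mpr (by exact_mod_cast hjm)⟩
  rwa [smul_smul, div_mul_cancel₀ _ hm₀.ne', ← castR_smul, ← castR_add] at this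

theorem exists_castR_add_smul_add_mem (hΔ : Convex ℝ Δ) {x e z : Fin k → ℤ} {t D : ℤ}
    (hD : 0 < D) (hx : castR x ∈ Δ) (hxe : castR (x + e) ∈ Δ)
    (hr : castR (x + t • e + D • z) ∈ Δ) : ∃ n : ℤ, castR (x + n • e + z) ∈ Δ := by
  -- `n = ⌈t / D⌉`: the weights below are nonnegative because `t ≤ n D ≤ t + D - 1`.
  set n := (t + D - 1) / D
  have hn₁ : t ≤ n * D := by
    have := Int.lt_ediv_add_one_mul_self (t + D - 1) hD
    linarith
  have hn₂ : n * D ≤ t + D - 1 := Int.ediv_mul_le _ hD.ne'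
  refine ⟨n, ?_⟩
  have hDR : (0 : ℝ) < D := by exact_mod_cast hD
  have hcomb : castR (x + n • e + z) =
      ∑ i, ![((t + D - 1 - n * D : ℤ) : ℝ) / D, ((n * D - t : ℤ) : ℝ) / D, 1 / D] i •
        ![castR x, castR (x + e), castR (x + t • e + D • z)] i := by
    simp only [Fin.sum_univ_three, Matrix.cons_val_zero, Matrix.cons_val_one, Matrix.cons_val_two,
      Matrix.head_cons, Matrix.tail_cons, castR_add, castR_smul]
    match_scalars <;> field_simp <;> ring
  rw [hcomb]
  refine hΔ.sum_mem (fun i _ => ?_) ?_ (fun i _ => ?_)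
  · fin_cases i
    · exact div_nonneg (by exact_mod_cast (by omega)) hDR.le
    · exact div_nonneg (by exact_mod_cast (by omega)) hDR.le
    · exact div_nonneg zero_le_one hDR.le
  · simp only [Fin.sum_univ_three, Matrix.cons_val_zero, Matrix.cons_val_one, Matrix.cons_val_two,
      Matrix.head_cons, Matrix.tail_cons]
    field_simp
    push_cast
    ring
  · fin_cases i
    exacts [hx, hxe, hr]

end LatticePoints

abbrev latticeHull {k : ℕ} (V : Finset (Fin k → ℤ)) : Set (Fin k → ℝ) :=
  convexHull ℝ (castR '' (V : Set (Fin k → ℤ)))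

section Width

variable {k : ℕ}

def pairing (v : Fin k → ℤ) : (Fin k → ℝ) →ₗ[ℝ] ℝ where
  toFun x := x ⬝ᵥ castR v
  map_add' x y := add_dotProduct x y _
  map_smul' c x := smul_dotProduct c x _

theorem lwv_eq_sSup_sub_sInf (Δ : Set (Fin k → ℝ)) (v : Fin k → ℤ) :
    lwv k Δ v = sSup (pairing v '' Δ) - sInf (pairing v '' Δ) := rfl

@[simp]
theorem pairing_castR (v p : Fin k → ℤ) : pairing v (castR p) = ((p ⬝ᵥ v : ℤ) : ℝ) := by
  simp [pairing, castR, dotProduct]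

theorem pairing_ne_zero {v : Fin k → ℤ} (hv : v ≠ 0) : pairing v ≠ 0 := by
  obtain ⟨i, hi⟩ := Function.ne_iff.mp hv
  intro h
  have := LinearMap.congr_fun h (castR (Pi.single i 1))
  rw [pairing_castR, single_dotProduct, one_mul, LinearMap.zero_apply, Int.cast_eq_zero] at this
  exact hi this

variable (V : Finset (Fin k → ℤ)) (hV : V.Nonempty) (v : Fin k → ℤ)

theorem image_pairing_latticeHull_subset_Icc :
    pairing v '' latticeHull V ⊆
      Set.Icc ((V.inf' hV (· ⬝ᵥ v) : ℤ) : ℝ) ((V.sup' hV (· ⬝ᵥ v) : ℤ) : ℝ) := by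
  rw [LinearMap.image_convexHull]
  refine convexHull_min ?_ (convex_Icc _ _)
  rintro _ ⟨_, ⟨p, hp, rfl⟩, rfl⟩
  simp only [pairing_castR, Set.mem_Icc, Int.cast_le]
  exact ⟨V.inf'_le _ hp, V.le_sup' (· ⬝ᵥ v) hp⟩

theorem dotProduct_mem_Icc_of_castR_mem_latticeHull {p : Fin k → ℤ}
    (hp : castR p ∈ latticeHull V) :
    p ⬝ᵥ v ∈ Set.Icc (V.inf' hV (· ⬝ᵥ v)) (V.sup' hV (· ⬝ᵥ v)) := by
  simpa using image_pairing_latticeHull_subset_Icc V hV v ⟨_, hp, rfl⟩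

theorem lwv_latticeHull :
    lwv k (latticeHull V) v = ((V.sup' hV (· ⬝ᵥ v) - V.inf' hV (· ⬝ᵥ v) : ℤ) : ℝ) := by
  have attained (n : ℤ) (hn : ∃ p ∈ V, n = p ⬝ᵥ v) : (n : ℝ) ∈ pairing v '' latticeHull V := by
    obtain ⟨p, hp, rfl⟩ := hn
    exact ⟨castR p, subset_convexHull ℝ _ ⟨p, hp, rfl⟩, pairing_castR v p⟩
  have hbounds := image_pairing_latticeHull_subset_Icc V hV v
  rw [lwv_eq_sSup_sub_sInf,
    IsGreatest.csSup_eq ⟨attained _ (V.exists_mem_eq_sup' hV _), fun _ hy => (hbounds hy).2⟩,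
    IsLeast.csInf_eq ⟨attained _ (V.exists_mem_eq_inf' hV _), fun _ hy => (hbounds hy).1⟩,
    Int.cast_sub]

end Width

theorem lw_le_lwv {k : ℕ} (V : Finset (Fin k → ℤ)) (hV : V.Nonempty) {v : Fin k → ℤ}
    (hv : v ≠ 0) :
    lw k (latticeHull V) ≤ lwv k (latticeHull V) v := by
  refine csInf_le ⟨0, ?_⟩ ⟨v, hv, rfl⟩
  rintro _ ⟨u, -, rfl⟩
  rw [lwv_latticeHull V hV]
  exact_mod_cast sub_nonneg.mpr
    ((V.inf'_le _ hV.choose_spec).trans (V.le_sup' (· ⬝ᵥ u) hV.choose_spec))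

theorem collinear_of_forall_apply_eq {K E : Type*} [Field K] [AddCommGroup E] [Module K E]
    [FiniteDimensional K E] (hE : Module.finrank K E = 2) {f : Module.Dual K E} (hf : f ≠ 0)
    {s : Set E} {c : K} (hs : ∀ x ∈ s, f x = c) : Collinear K s := by
  have hspan : vectorSpan K s ≤ LinearMap.ker f := by
    rw [vectorSpan_def, Submodule.span_le]
    rintro _ ⟨x, hx, y, hy, rfl⟩
    simp [hs x hx, hs y hy]
  have hker := Module.Dual.finrank_ker_add_one_of_ne_zero hf
  rw [collinear_iff_finrank_le_one]
  exact (Submodule.finrank_mono hspan).trans (by omega)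

section Plane

theorem exists_isCoprime_smul_eq {w : Fin 2 → ℤ} (hw : w ≠ 0) :
    ∃ g : ℤ, 0 < g ∧ ∃ e : Fin 2 → ℤ, IsCoprime (e 0) (e 1) ∧ w = g • e := by
  have hg : 0 < Int.gcd (w 0) (w 1) := Int.gcd_pos_iff.mpr <| by
    by_contra! h
    exact hw (by ext i; fin_cases i <;> simp [h.1, h.2])
  refine ⟨(Int.gcd (w 0) (w 1) : ℤ), by exact_mod_cast hg, fun i => w i / Int.gcd (w 0) (w 1),
    Int.isCoprime_iff_gcd_eq_one.mpr (Int.gcd_div_gcd_div_gcd hg), ?_⟩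
  ext i
  fin_cases i
  · simp [Int.mul_ediv_cancel' (Int.gcd_dvd_left (w 0) (w 1))]
  · simp [Int.mul_ediv_cancel' (Int.gcd_dvd_right (w 0) (w 1))]

variable {Δ : Set (Fin 2 → ℝ)}

theorem exists_isCoprime_castR_add_mem (hΔ : Convex ℝ Δ)
    (hcard : 4 < {p : Fin 2 → ℤ | castR p ∈ Δ}.ncard) :
    ∃ x e : Fin 2 → ℤ, IsCoprime (e 0) (e 1) ∧
      castR x ∈ Δ ∧ castR (x + e) ∈ Δ ∧ castR (x + (2 : ℤ) • e) ∈ Δ := by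
  obtain ⟨x, hx, w, hw, hxw⟩ := exists_add_two_smul_mem_of_two_pow_lt_ncard
    (S := {p : Fin 2 → ℤ | castR p ∈ Δ}) (by norm_num [hcard])
  obtain ⟨g, hg, e, he, rfl⟩ := exists_isCoprime_smul_eq hw
  rw [Set.mem_ofPred_eq, smul_smul] at hxw
  refine ⟨x, e, he, hx, ?_, castR_add_smul_mem hΔ hx hxw zero_le_two (by omega)⟩
  simpa using castR_add_smul_mem hΔ hx hxw zero_le_one (by omega)

theorem exists_castR_mem_dotProduct_perp_ne (hΔ : Convex ℝ Δ) {x e r : Fin 2 → ℤ}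
    (he : IsCoprime (e 0) (e 1)) (hx : castR x ∈ Δ) (hxe : castR (x + e) ∈ Δ)
    (hr : castR r ∈ Δ) (hxr : 2 ≤ |r ⬝ᵥ perp e - x ⬝ᵥ perp e|) :
    ∃ y, castR y ∈ Δ ∧ y ⬝ᵥ perp e ≠ x ⬝ᵥ perp e ∧ y ⬝ᵥ perp e ≠ r ⬝ᵥ perp e := by
  obtain ⟨z, hz⟩ := exists_dotProduct_perp_eq_one he
  set D := r ⬝ᵥ perp e - x ⬝ᵥ perp e with hD
  set t := z ⬝ᵥ perp (r - x)
  have hr' : r = x + t • e + D • z := by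
    rw [hD, ← sub_dotProduct, add_assoc, ← eq_smul_add_smul_of_dotProduct_perp_eq_one hz]
    abel
  rcases lt_or_gt_of_ne (show D ≠ 0 by rintro h; simp [h] at hxr) with hneg | hpos
  · have hr'' : castR (x + t • e + (-D) • -z) ∈ Δ := by rwa [neg_smul_neg, ← hr']
    obtain ⟨n, hn⟩ := exists_castR_add_smul_add_mem hΔ (neg_pos.mpr hneg) hx hxe hr''
    have hlevel : (x + n • e + -z) ⬝ᵥ perp e = x ⬝ᵥ perp e - 1 := by
      simp only [add_dotProduct, smul_dotProduct, neg_dotProduct, dotProduct_perp_self, hz,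
        smul_zero, add_zero, sub_eq_add_neg]
    rw [abs_of_neg hneg] at hxr
    exact ⟨_, hn, by omega, by omega⟩
  · obtain ⟨n, hn⟩ := exists_castR_add_smul_add_mem hΔ hpos hx hxe (by rwa [← hr'])
    have hlevel : (x + n • e + z) ⬝ᵥ perp e = x ⬝ᵥ perp e + 1 := by
      simp only [add_dotProduct, smul_dotProduct, dotProduct_perp_self, hz, smul_zero, add_zero]
    rw [abs_of_pos hpos] at hxr
    exact ⟨_, hn, by omega, by omega⟩

variable (V : Finset (Fin 2 → ℤ))

theorem lwv_perp_le_one {x e : Fin 2 → ℤ} (he : IsCoprime (e 0) (e 1))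
    (hx : castR x ∈ latticeHull V) (hxe : castR (x + e) ∈ latticeHull V)
    (htwo : ∀ p q r : Fin 2 → ℤ, castR p ∈ latticeHull V → castR q ∈ latticeHull V →
      castR r ∈ latticeHull V →
      p ⬝ᵥ perp e = q ⬝ᵥ perp e ∨ p ⬝ᵥ perp e = r ⬝ᵥ perp e ∨ q ⬝ᵥ perp e = r ⬝ᵥ perp e) :
    lwv 2 (latticeHull V) (perp e) ≤ 1 := by
  have hV : V.Nonempty := by
    rw [Finset.nonempty_iff_ne_empty]
    rintro rfl
    simp [latticeHull] at hx
  have hmem (p : Fin 2 → ℤ) (hp : p ∈ V) : castR p ∈ latticeHull V :=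
    subset_convexHull ℝ _ ⟨p, hp, rfl⟩
  obtain ⟨pM, hpM, hM⟩ := V.exists_mem_eq_sup' hV (· ⬝ᵥ perp e)
  obtain ⟨pm, hpm, hm⟩ := V.exists_mem_eq_inf' hV (· ⬝ᵥ perp e)
  have hxI := dotProduct_mem_Icc_of_castR_mem_latticeHull V hV (perp e) hx
  rw [lwv_latticeHull V hV]
  by_contra! hwide
  have hwide' : 2 ≤ V.sup' hV (· ⬝ᵥ perp e) - V.inf' hV (· ⬝ᵥ perp e) := by
    exact_mod_cast hwide
  obtain ⟨r, hr, hxr⟩ : ∃ r, castR r ∈ latticeHull V ∧ 2 ≤ |r ⬝ᵥ perp e - x ⬝ᵥ perp e| := by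
    rcases htwo x pM pm hx (hmem pM hpM) (hmem pm hpm) with h | h | h
    · exact ⟨pm, hmem pm hpm, by rw [abs_sub_comm, abs_of_nonneg] <;> omega⟩
    · exact ⟨pM, hmem pM hpM, by rw [abs_of_nonneg] <;> omega⟩
    · omega
  obtain ⟨y, hy, hyx, hyr⟩ :=
    exists_castR_mem_dotProduct_perp_ne (convex_convexHull ℝ _) he hx hxe hr hxr
  rcases htwo y x r hy hx hr with h | h | h
  · exact hyx h
  · exact hyr h
  · simp [h] at hxr

theorem nonempty_of_not_collinear_latticeHull (hfull : ¬Collinear ℝ (latticeHull V)) :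
    V.Nonempty := by
  rw [Finset.nonempty_iff_ne_empty]
  rintro rfl
  simp [latticeHull, collinear_empty] at hfull

theorem one_le_lwv (hfull : ¬Collinear ℝ (latticeHull V)) {v : Fin 2 → ℤ} (hv : v ≠ 0) :
    1 ≤ lwv 2 (latticeHull V) v := by
  have hV := nonempty_of_not_collinear_latticeHull V hfull
  rw [lwv_latticeHull V hV]
  by_contra! hlt
  have hle : V.sup' hV (· ⬝ᵥ v) ≤ V.inf' hV (· ⬝ᵥ v) := by
    have : V.sup' hV (· ⬝ᵥ v) - V.inf' hV (· ⬝ᵥ v) < 1 := by exact_mod_cast hlt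
    omega
  refine hfull (collinear_of_forall_apply_eq (by simp) (pairing_ne_zero hv)
    (c := ((V.inf' hV (· ⬝ᵥ v) : ℤ) : ℝ)) fun x hx => ?_)
  have := image_pairing_latticeHull_subset_Icc V hV v ⟨x, hx, rfl⟩
  exact le_antisymm (this.2.trans (by exact_mod_cast hle)) this.1

theorem one_le_lw (hfull : ¬Collinear ℝ (latticeHull V)) : 1 ≤ lw 2 (latticeHull V) :=
  le_csInf ⟨_, Pi.single 0 1, by simp, rfl⟩ <| by
    rintro _ ⟨v, hv, rfl⟩
    exact one_le_lwv V hfull hv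

theorem exists_lwv_eq_one_of_lw_eq_one (hfull : ¬Collinear ℝ (latticeHull V))
    (h : lw 2 (latticeHull V) = 1) : ∃ v ≠ 0, lwv 2 (latticeHull V) v = 1 := by
  have hV := nonempty_of_not_collinear_latticeHull V hfull
  by_contra! hne
  suffices (2 : ℝ) ≤ lw 2 (latticeHull V) by linarith
  refine le_csInf ⟨_, Pi.single 0 1, by simp, rfl⟩ ?_
  rintro _ ⟨v, hv, rfl⟩
  have h₁ := one_le_lwv V hfull hv
  have h₂ := hne v hv
  rw [lwv_latticeHull V hV] at h₁ h₂ ⊢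
  have h₁' : 1 ≤ V.sup' hV (· ⬝ᵥ v) - V.inf' hV (· ⬝ᵥ v) := by exact_mod_cast h₁
  have h₂' : V.sup' hV (· ⬝ᵥ v) - V.inf' hV (· ⬝ᵥ v) ≠ 1 := by exact_mod_cast h₂
  exact_mod_cast (by omega : 2 ≤ V.sup' hV (· ⬝ᵥ v) - V.inf' hV (· ⬝ᵥ v))

theorem exists_dotProduct_eq_or_eq_add_one_of_lw_eq_one (hfull : ¬Collinear ℝ (latticeHull V))
    (h : lw 2 (latticeHull V) = 1) :
    ∃ v ≠ 0, ∃ m : ℤ, ∀ p : Fin 2 → ℤ, castR p ∈ latticeHull V → p ⬝ᵥ v = m ∨ p ⬝ᵥ v = m + 1 := by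
  have hV := nonempty_of_not_collinear_latticeHull V hfull
  obtain ⟨v, hv, hv₁⟩ := exists_lwv_eq_one_of_lw_eq_one V hfull h
  rw [lwv_latticeHull V hV] at hv₁
  have hv₁' : V.sup' hV (· ⬝ᵥ v) - V.inf' hV (· ⬝ᵥ v) = 1 := by exact_mod_cast hv₁
  refine ⟨v, hv, V.inf' hV (· ⬝ᵥ v), fun p hp => ?_⟩
  have := dotProduct_mem_Icc_of_castR_mem_latticeHull V hV v hp
  rw [Set.mem_Icc] at this
  omega

theorem lw_eq_one_of_vanishing_quadratic {K : Type*} [Field K] [CharZero K]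
    (hfull : ¬Collinear ℝ (latticeHull V))
    (hcard : 4 < {p : Fin 2 → ℤ | castR p ∈ latticeHull V}.ncard)
    {v b : Fin 2 → K} {a : K} (hv : v ≠ 0)
    (hQ : ∀ p : Fin 2 → ℤ, castR p ∈ latticeHull V →
      (v ⬝ᵥ (Int.cast ∘ p)) ^ 2 + (a + b ⬝ᵥ (Int.cast ∘ p)) = 0) :
    lw 2 (latticeHull V) = 1 := by
  obtain ⟨x, e, he, hx, hxe, hx2e⟩ := exists_isCoprime_castR_add_mem (convex_convexHull ℝ _) hcard
  have he₀ : e ≠ 0 := by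
    rintro rfl
    simp [isCoprime_zero_left] at he
  refine le_antisymm ?_ (one_le_lw V hfull)
  refine (lw_le_lwv V (nonempty_of_not_collinear_latticeHull V hfull)
    (perp_eq_zero_iff.not.mpr he₀)).trans (lwv_perp_le_one V he hx hxe fun p q r hp hq hr => ?_)
  exact dotProduct_perp_eq_or_of_vanishing_quadratic (S := {p | castR p ∈ latticeHull V}) hv hQ
    he₀ hx hxe hx2e hp hq hr

end Plane

end LatticePolygon

open LatticePolygon

/-- For a full-dimensional lattice polygon `Δ` with at least `6` lattice points,
`lw(Δ) = 1` if and only if the lattice points of `Δ` lie on a "parabola"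
`(v₁x + v₂y)² + g = 0` with `deg g ≤ 1`. -/
theorem lw_eq_one_iff_parabola (V : Finset (Fin 2 → ℤ)) (Δ : Set (Fin 2 → ℝ))
    (hΔ : Δ = convexHull ℝ (castR '' (V : Set (Fin 2 → ℤ))))
    (hfull : ¬ Collinear ℝ Δ)
    (h6 : 6 ≤ {p : Fin 2 → ℤ | castR p ∈ Δ}.ncard) :
    lw 2 Δ = 1 ↔
    (∃ v : Fin 2 → ℂ, v ≠ 0 ∧ ∃ g : MvPolynomial (Fin 2) ℂ, g.totalDegree ≤ 1 ∧
        ∀ p : Fin 2 → ℤ, castR p ∈ Δ →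
          (v 0 * (p 0 : ℂ) + v 1 * (p 1 : ℂ)) ^ 2 +
            MvPolynomial.eval (fun i => (p i : ℂ)) g = 0) := by
  subst hΔ
  have hdot (v : Fin 2 → ℂ) (p : Fin 2 → ℤ) :
      v 0 * (p 0 : ℂ) + v 1 * (p 1 : ℂ) = v ⬝ᵥ fun i => (p i : ℂ) := by
    simp [dotProduct, Fin.sum_univ_two]
  simp only [hdot]
  constructor
  · intro h
    obtain ⟨v, hv, m, hm⟩ := exists_dotProduct_eq_or_eq_add_one_of_lw_eq_one V hfull h
    set b : Fin 2 → ℂ := (-(2 * m + 1) : ℂ) • (Int.cast ∘ v)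
    refine ⟨Int.cast ∘ v, fun h₀ => hv (by ext i; simpa using congrFun h₀ i),
      C ((m * (m + 1) : ℤ) : ℂ) + ∑ i, C (b i) * X i,
      totalDegree_C_add_sum_C_mul_X_le_one _ _, fun p hp => ?_⟩
    have hvp : ((Int.cast ∘ v) ⬝ᵥ fun i => (p i : ℂ)) = ((p ⬝ᵥ v : ℤ) : ℂ) := by
      simp [dotProduct, mul_comm]
    rw [eval_C_add_sum_C_mul_X, smul_dotProduct, hvp]
    rcases hm p hp with h | h <;> rw [h] <;> push_cast <;> ring
  · rintro ⟨v, hv, g, hg, hvanish⟩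
    obtain ⟨a, b, hab⟩ := exists_eval_eq_add_dotProduct_of_totalDegree_le_one hg
    exact lw_eq_one_of_vanishing_quadratic V hfull (lt_of_lt_of_le (by norm_num) h6) hv
      fun p hp => hab _ ▸ hvanish p hp
end

section
/- Let Δ ⊂ ℝ² be a full-dimensional lattice polygon with |Δ ∩ ℤ²| ≥ 6, and suppose that every point of Δ ∩ ℤ² lies on L₁ ∪ L₂, where L₁ and L₂ are two non-parallel lines in ℝ². Then L₁ or L₂ contains at least 4 points of Δ ∩ ℤ². -/
/-!
Suppose neither line carries four lattice points of `Δ`. As `Δ` has at least six, each line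
carries exactly three, and no lattice point of `Δ` lies on both lines. By convexity, the lattice
points of `Δ` contain the midpoint of any two of them that are congruent mod 2. Hence no two
congruent lattice points lie on different lines (their midpoint would lie on neither line), no
three on one line are pairwise congruent, and the three points of each line form a progression
`p - u, p, p + u` with `u ≢ 0 mod 2`, occupying two of the four classes mod 2. The two lines occupy
complementary pairs of classes, which forces `u ≡ v mod 2` for the step `v` of the progression
`q - v, q, q + v` on the other line. After choosing the signs of `u` and `v`, one of the lattice
points `p + (u + v) / 2`, `q + (u + v) / 2` is a convex combination of `p, p + u, q + v`
(resp. `q, q + v, p + u`) lying on neither line: a contradiction.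
-/

open Set

section castR

variable {k : ℕ}

@[simp] lemma castR_apply (x : Fin k → ℤ) (i : Fin k) : castR x i = x i := rfl

@[simp] lemma castR_zero : castR (0 : Fin k → ℤ) = 0 := by ext; simp

@[simp] lemma castR_add (x y : Fin k → ℤ) : castR (x + y) = castR x + castR y := by ext; simp

@[simp] lemma castR_neg (x : Fin k → ℤ) : castR (-x) = -castR x := by ext; simp

lemma castR_injective : Function.Injective (castR (k := k)) :=
  fun _ _ h => funext fun i => by simpa using congrFun h i

end castR

def MidpointClosed {G : Type*} [AddMonoid G] (T : Set G) : Prop :=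
  ∀ x ∈ T, ∀ w, x + 2 • w ∈ T → x + w ∈ T

lemma Convex.midpointClosed_preimage_castR {k : ℕ} {K : Set (Fin k → ℝ)} (hK : Convex ℝ K) :
    MidpointClosed (castR ⁻¹' K) := by
  intro x hx w hw
  have hmid : castR (x + w) = (1 / 2 : ℝ) • castR x + (1 / 2 : ℝ) • castR (x + 2 • w) := by
    simp only [two_nsmul, castR_add]
    module
  simpa only [mem_preimage, hmid] using hK hx hw (by norm_num) (by norm_num) (by norm_num)

section parity

variable {ι : Type*}

def parity : (ι → ℤ) →+ (ι → ZMod 2) := (Int.castAddHom (ZMod 2)).compLeft ι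

@[simp] lemma parity_apply (x : ι → ℤ) (i : ι) : parity x i = x i := rfl

lemma parity_eq_zero_iff {x : ι → ℤ} : parity x = 0 ↔ ∃ w, x = 2 • w := by
  constructor
  · intro h
    refine ⟨fun i => x i / 2, funext fun i => ?_⟩
    have := (ZMod.intCast_zmod_eq_zero_iff_dvd (x i) 2).1 (congrFun h i)
    simp only [Pi.smul_apply, nsmul_eq_mul]
    push_cast
    omega
  · rintro ⟨w, rfl⟩
    ext i
    simp [show (2 : ZMod 2) = 0 from rfl]

lemma parity_neg (x : ι → ℤ) : parity (-x) = parity x := by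
  ext i
  simp [ZMod.neg_eq_self_mod_two]

lemma parity_add_eq_zero {x y : ι → ℤ} (h : parity x = parity y) : parity (x + y) = 0 := by
  rw [map_add, h, ← two_nsmul]
  ext i
  simp [show (2 : ZMod 2) = 0 from rfl]

end parity

namespace MidpointClosed

variable {ι : Type*} {T : Set (ι → ℤ)}

lemma parity_ne_zero (hT : MidpointClosed T) {p u : ι → ℤ} (hTeq : T = {p - u, p, p + u})
    (hu : u ≠ 0) : parity u ≠ 0 := by
  rw [Ne, parity_eq_zero_iff]
  rintro ⟨w, rfl⟩
  have hmid : p + w ∈ T := hT p (by simp [hTeq]) w (by simp [hTeq])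
  simp only [hTeq, mem_insert_iff, mem_singleton_iff] at hmid
  apply hu
  ext i
  rcases hmid with h | h | h <;> have := congrFun h i <;> simp at this ⊢ <;> omega

lemma exists_eq_of_ncard_image_parity_lt (hT : MidpointClosed T) (h3 : T.ncard = 3)
    (hlt : (parity '' T).ncard < 3) : ∃ p u, T = {p - u, p, p + u} ∧ parity u ≠ 0 := by
  have hfin : T.Finite := finite_of_ncard_ne_zero (by omega)
  obtain ⟨a, ha, b, hb, hab, hpar⟩ := exists_ne_map_eq_of_ncard_lt_of_maps_to (h3 ▸ hlt)
    (fun x hx => mem_image_of_mem parity hx) (hfin.image _)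
  obtain ⟨u, hu⟩ := parity_eq_zero_iff.1 (show parity (b - a) = 0 by rw [map_sub, hpar, sub_self])
  obtain rfl : b = a + u + u := by rw [sub_eq_iff_eq_add'.1 hu]; abel
  have hu0 : u ≠ 0 := by rintro rfl; simp at hab
  have hTeq : T = {a + u - u, a + u, a + u + u} := by
    refine (eq_of_subset_of_ncard_le ?_ ?_ hfin).symm
    · simp [insert_subset_iff, ha, hb, hT a ha u (by rwa [two_nsmul, ← add_assoc])]
    · rw [h3, ncard_eq_three.2 ⟨_, _, _, ?_, ?_, ?_, rfl⟩]
      all_goals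
        exact fun h => hu0 (funext fun i => by have := congrFun h i; simp at this ⊢; omega)
  exact ⟨a + u, u, hTeq, hT.parity_ne_zero hTeq hu0⟩

lemma two_le_ncard_image_parity (hT : MidpointClosed T) (h3 : T.ncard = 3) :
    2 ≤ (parity '' T).ncard := by
  by_contra! hlt
  obtain ⟨p, u, hTeq, hu⟩ := hT.exists_eq_of_ncard_image_parity_lt h3 (by omega)
  have hne : parity (p - u) ≠ parity p := by simpa [map_sub] using hu
  have hsub : {parity (p - u), parity p} ⊆ parity '' T := by simp [hTeq, insert_subset_iff]
  have := ncard_le_ncard hsub ((finite_of_ncard_ne_zero (by omega : T.ncard ≠ 0)).image _)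
  rw [ncard_pair hne] at this
  omega

end MidpointClosed

lemma ncard_image_parity_lt_three {T₁ T₂ : Set (Fin 2 → ℤ)} (hT₂ : MidpointClosed T₂)
    (h₂ : T₂.ncard = 3) (hdisj : Disjoint (parity '' T₁) (parity '' T₂)) :
    (parity '' T₁).ncard < 3 := by
  have hunion := ncard_union_eq hdisj (toFinite _) (toFinite _)
  have hcard := ncard_le_card (parity '' T₁ ∪ parity '' T₂)
  have htwo := hT₂.two_le_ncard_image_parity h₂
  rw [show Nat.card (Fin 2 → ZMod 2) = 4 by simp] at hcard
  omega

-- `x, y, z, t` are the four elements of `(ZMod 2)²`, whose sum is zero.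
set_option synthInstance.maxSize 1000 in
lemma sub_eq_sub_of_pairwise_ne : ∀ x y z t : Fin 2 → ZMod 2,
    x ≠ y → z ≠ t → x ≠ z → x ≠ t → y ≠ z → y ≠ t → x - y = z - t := by
  decide

lemma parity_eq_of_disjoint {T₁ T₂ : Set (Fin 2 → ℤ)} {p u q v : Fin 2 → ℤ}
    (hp : p ∈ T₁) (hpu : p - u ∈ T₁) (hq : q ∈ T₂) (hqv : q - v ∈ T₂)
    (hu : parity u ≠ 0) (hv : parity v ≠ 0) (hdisj : Disjoint (parity '' T₁) (parity '' T₂)) :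
    parity u = parity v := by
  have hne {x y} (hx : x ∈ T₁) (hy : y ∈ T₂) : parity x ≠ parity y :=
    hdisj.ne_of_mem (mem_image_of_mem _ hx) (mem_image_of_mem _ hy)
  have hpu' : parity p ≠ parity (p - u) := fun h => hu (by simpa using h.symm)
  have hqv' : parity q ≠ parity (q - v) := fun h => hv (by simpa using h.symm)
  simpa using sub_eq_sub_of_pairwise_ne _ _ _ _ hpu' hqv' (hne hp hq) (hne hp hqv) (hne hpu hq)
    (hne hpu hqv)

lemma exists_progressions_of_disjoint_image_parity {T₁ T₂ : Set (Fin 2 → ℤ)}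
    (hmid₁ : MidpointClosed T₁) (hmid₂ : MidpointClosed T₂) (h₁ : T₁.ncard = 3) (h₂ : T₂.ncard = 3)
    (hdisj : Disjoint (parity '' T₁) (parity '' T₂)) :
    ∃ p u q v, T₁ = {p - u, p, p + u} ∧ T₂ = {q - v, q, q + v} ∧ u ≠ 0 ∧ v ≠ 0 ∧
      parity u = parity v := by
  obtain ⟨p, u, hT₁, hu⟩ :=
    hmid₁.exists_eq_of_ncard_image_parity_lt h₁ (ncard_image_parity_lt_three hmid₂ h₂ hdisj)
  obtain ⟨q, v, hT₂, hv⟩ :=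
    hmid₂.exists_eq_of_ncard_image_parity_lt h₂ (ncard_image_parity_lt_three hmid₁ h₁ hdisj.symm)
  refine ⟨p, u, q, v, hT₁, hT₂, ne_of_apply_ne parity (by rwa [map_zero]),
    ne_of_apply_ne parity (by rwa [map_zero]), ?_⟩
  exact parity_eq_of_disjoint (p := p) (q := q) (by simp [hT₁]) (by simp [hT₁]) (by simp [hT₂])
    (by simp [hT₂]) hu hv hdisj

lemma Set.ncard_eq_of_le_ncard_union {α : Type*} {s t : Set α} {n : ℕ} (hn : n ≠ 0)
    (h : 2 * n ≤ (s ∪ t).ncard) (hs : s.ncard ≤ n) (ht : t.ncard ≤ n) :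
    s.ncard = n ∧ t.ncard = n ∧ Disjoint s t := by
  have hfin : (s ∪ t).Finite := finite_of_ncard_ne_zero (by omega)
  have hsum := ncard_union_add_ncard_inter s t (hfin.subset subset_union_left)
    (hfin.subset subset_union_right)
  refine ⟨by omega, by omega, ?_⟩
  rw [disjoint_iff_inter_eq_empty,
    ← ncard_eq_zero (hfin.subset (inter_subset_left.trans subset_union_left))]
  omega

/- In the coordinates `(ℓ₂ - ℓ₂ q, ℓ₁ - ℓ₁ p)`, with `h = ℓ₂ u` and `k = ℓ₁ v`, the points
`p`, `p + u`, `q + v` and `p + (u + v) / 2` are `(α h, 0)`, `((α + 1) h, 0)`, `(0, (β + 1) k)` and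
`((α + 1/2) h, k / 2)`; the weights below solve the resulting linear system. -/
lemma Convex.add_half_smul_add_mem {V : Type*} [AddCommGroup V] [Module ℝ V] {K : Set V}
    (hK : Convex ℝ K) {ℓ₁ ℓ₂ : V →ₗ[ℝ] ℝ} (hℓ : ∀ w, ℓ₁ w = 0 → ℓ₂ w = 0 → w = 0)
    {p u q v : V} (hp : p ∈ K) (hpu : p + u ∈ K) (hqv : q + v ∈ K) (hu : ℓ₁ u = 0)
    (hv : ℓ₂ v = 0) {α β : ℝ} (hα : 0 < α) (hαβ : α ≤ β) (hpq : ℓ₂ (p - q) = α * ℓ₂ u)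
    (hqp : ℓ₁ (q - p) = β * ℓ₁ v) : p + (1 / 2 : ℝ) • (u + v) ∈ K := by
  have hβ : 0 < 2 * (β + 1) := by linarith
  have hβ' : β + 1 ≠ 0 := by linarith
  have hcomb : p + (1 / 2 : ℝ) • (u + v) = ((β - α) / (2 * (β + 1))) • p +
      ((α + β + 1) / (2 * (β + 1))) • (p + u) + (1 / (2 * (β + 1))) • (q + v) := by
    rw [map_sub] at hpq hqp
    refine sub_eq_zero.1 (hℓ _ ?_ ?_) <;> simp only [map_sub, map_add, map_smul, smul_eq_mul] <;>
      field_simp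
    · linear_combination -hqp - α * hu
    · linear_combination hpq + β * hv
  rw [hcomb]
  have h₁ : 0 ≤ (β - α) / (2 * (β + 1)) := div_nonneg (by linarith) hβ.le
  have h₂ : 0 ≤ (α + β + 1) / (2 * (β + 1)) := div_nonneg (by linarith) hβ.le
  have h₃ : 0 ≤ 1 / (2 * (β + 1)) := div_nonneg zero_le_one hβ.le
  have := hK.sum_mem (t := Finset.univ) (w := ![(β - α) / (2 * (β + 1)),
    (α + β + 1) / (2 * (β + 1)), 1 / (2 * (β + 1))]) (z := ![p, p + u, q + v]) ?_ ?_ ?_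
  · simpa [Fin.sum_univ_three] using this
  · intro i _
    fin_cases i <;> assumption
  · simp [Fin.sum_univ_three]
    field_simp
    ring
  · intro i _
    fin_cases i <;> assumption

section lattice

variable {k : ℕ} {Δ : Set (Fin k → ℝ)} {ℓ₁ ℓ₂ : (Fin k → ℝ) →ₗ[ℝ] ℝ} {c₁ c₂ : ℝ}

lemma disjoint_image_parity (hΔ : Convex ℝ Δ)
    (hcover : ∀ x, castR x ∈ Δ → ℓ₁ (castR x) = c₁ ∨ ℓ₂ (castR x) = c₂)
    (hdisj : Disjoint (castR ⁻¹' (Δ ∩ ℓ₁ ⁻¹' {c₁})) (castR ⁻¹' (Δ ∩ ℓ₂ ⁻¹' {c₂}))) :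
    Disjoint (parity '' (castR ⁻¹' (Δ ∩ ℓ₁ ⁻¹' {c₁})))
      (parity '' (castR ⁻¹' (Δ ∩ ℓ₂ ⁻¹' {c₂}))) := by
  rw [disjoint_left]
  rintro _ ⟨x, hx, rfl⟩ ⟨y, hy, hxy⟩
  obtain ⟨w, hw⟩ := parity_eq_zero_iff.1 (show parity (y - x) = 0 by rw [map_sub, hxy, sub_self])
  obtain rfl : y = x + 2 • w := sub_eq_iff_eq_add'.1 hw
  have hx₁ : ℓ₁ (castR x) = c₁ := hx.2
  have hy₂ : ℓ₂ (castR x) + (ℓ₂ (castR w) + ℓ₂ (castR w)) = c₂ := by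
    simpa only [mem_preimage, mem_singleton_iff, two_nsmul, castR_add, map_add] using hy.2
  have hm : castR (x + w) ∈ Δ := hΔ.midpointClosed_preimage_castR x hx.1 w hy.1
  rcases hcover (x + w) hm with h | h <;> simp only [castR_add, map_add] at h
  · have hy₁ : x + 2 • w ∈ castR ⁻¹' (Δ ∩ ℓ₁ ⁻¹' {c₁}) := by
      refine ⟨hy.1, ?_⟩
      simp only [mem_preimage, mem_singleton_iff, two_nsmul, castR_add, map_add]
      linarith
    exact disjoint_left.1 hdisj hy₁ hy
  · have hx₂ : x ∈ castR ⁻¹' (Δ ∩ ℓ₂ ⁻¹' {c₂}) :=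
      ⟨hx.1, by simp only [mem_preimage, mem_singleton_iff]; linarith⟩
    exact disjoint_left.1 hdisj hx hx₂

lemma map_castR_eq_zero_of_add_mem {p u : Fin k → ℤ} (hp : p ∈ castR ⁻¹' (Δ ∩ ℓ₁ ⁻¹' {c₁}))
    (hpu : p + u ∈ castR ⁻¹' (Δ ∩ ℓ₁ ⁻¹' {c₁})) : ℓ₁ (castR u) = 0 := by
  have : ℓ₁ (castR p) + ℓ₁ (castR u) = c₁ := by simpa using hpu.2
  linarith [show ℓ₁ (castR p) = c₁ from hp.2]

lemma map_castR_ne_zero_of_add_mem (hℓ : ∀ w, ℓ₁ w = 0 → ℓ₂ w = 0 → w = 0) {p u : Fin k → ℤ}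
    (hp : p ∈ castR ⁻¹' (Δ ∩ ℓ₁ ⁻¹' {c₁})) (hpu : p + u ∈ castR ⁻¹' (Δ ∩ ℓ₁ ⁻¹' {c₁}))
    (hu : u ≠ 0) : ℓ₂ (castR u) ≠ 0 := fun h =>
  hu (castR_injective (by rw [castR_zero]; exact hℓ _ (map_castR_eq_zero_of_add_mem hp hpu) h))

lemma exists_latticePoint_of_le (hΔ : Convex ℝ Δ) (hℓ : ∀ w, ℓ₁ w = 0 → ℓ₂ w = 0 → w = 0)
    {p u q v w : Fin k → ℤ} (hp : p ∈ castR ⁻¹' (Δ ∩ ℓ₁ ⁻¹' {c₁}))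
    (hpu : p + u ∈ castR ⁻¹' (Δ ∩ ℓ₁ ⁻¹' {c₁})) (hq : q ∈ castR ⁻¹' (Δ ∩ ℓ₂ ⁻¹' {c₂}))
    (hqv : q + v ∈ castR ⁻¹' (Δ ∩ ℓ₂ ⁻¹' {c₂})) (hw : u + v = 2 • w)
    (hα : 0 < (ℓ₂ (castR p) - c₂) / ℓ₂ (castR u))
    (hαβ : (ℓ₂ (castR p) - c₂) / ℓ₂ (castR u) ≤ (ℓ₁ (castR q) - c₁) / ℓ₁ (castR v)) :
    ∃ g, castR g ∈ Δ ∧ ℓ₁ (castR g) ≠ c₁ ∧ ℓ₂ (castR g) ≠ c₂ := by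
  have hp₁ : ℓ₁ (castR p) = c₁ := hp.2
  have hu := map_castR_eq_zero_of_add_mem hp hpu
  have hv := map_castR_eq_zero_of_add_mem hq hqv
  have hh : ℓ₂ (castR u) ≠ 0 := fun h => by simp [h] at hα
  have hk : ℓ₁ (castR v) ≠ 0 := fun h => by simp only [h, div_zero] at hαβ; linarith
  have hg : castR (p + w) = castR p + (1 / 2 : ℝ) • (castR u + castR v) := by
    rw [← castR_add, hw, two_nsmul, castR_add, castR_add]
    module
  refine ⟨p + w, hg ▸ hΔ.add_half_smul_add_mem hℓ hp.1 (by simpa using hpu.1)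
    (by simpa using hqv.1) hu hv hα hαβ ?_ ?_, ?_, ?_⟩
  · rw [map_sub, show ℓ₂ (castR q) = c₂ from hq.2, div_mul_cancel₀ _ hh]
  · rw [map_sub, hp₁, div_mul_cancel₀ _ hk]
  · simpa [hg, hu, hp₁] using hk
  · intro h
    simp only [hg, map_add, map_smul, smul_eq_mul] at h
    have : (ℓ₂ (castR p) - c₂) / ℓ₂ (castR u) = -1 / 2 := by
      field_simp
      linarith
    linarith

lemma exists_latticePoint_off_lines (hΔ : Convex ℝ Δ)
    (hℓ : ∀ w, ℓ₁ w = 0 → ℓ₂ w = 0 → w = 0) {p u q v : Fin k → ℤ}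
    (hp : p ∈ castR ⁻¹' (Δ ∩ ℓ₁ ⁻¹' {c₁})) (hpu : p + u ∈ castR ⁻¹' (Δ ∩ ℓ₁ ⁻¹' {c₁}))
    (hpu' : p - u ∈ castR ⁻¹' (Δ ∩ ℓ₁ ⁻¹' {c₁})) (hp₂ : p ∉ castR ⁻¹' (Δ ∩ ℓ₂ ⁻¹' {c₂}))
    (hq : q ∈ castR ⁻¹' (Δ ∩ ℓ₂ ⁻¹' {c₂})) (hqv : q + v ∈ castR ⁻¹' (Δ ∩ ℓ₂ ⁻¹' {c₂}))
    (hqv' : q - v ∈ castR ⁻¹' (Δ ∩ ℓ₂ ⁻¹' {c₂})) (hq₁ : q ∉ castR ⁻¹' (Δ ∩ ℓ₁ ⁻¹' {c₁}))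
    (hu : u ≠ 0) (hv : v ≠ 0) (huv : parity u = parity v) :
    ∃ g, castR g ∈ Δ ∧ ℓ₁ (castR g) ≠ c₁ ∧ ℓ₂ (castR g) ≠ c₂ := by
  wlog hα : 0 < (ℓ₂ (castR p) - c₂) / ℓ₂ (castR u) generalizing u with H
  · have hm : ℓ₂ (castR p) - c₂ ≠ 0 := sub_ne_zero.2 fun h => hp₂ ⟨hp.1, h⟩
    have hh := map_castR_ne_zero_of_add_mem hℓ hp hpu hu
    refine H (u := -u) (by rwa [← sub_eq_add_neg]) (by rwa [sub_neg_eq_add]) (neg_ne_zero.2 hu)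
      (by rwa [parity_neg]) ?_
    rw [castR_neg, map_neg, div_neg, neg_pos]
    exact lt_of_le_of_ne (not_lt.1 hα) (div_ne_zero hm hh)
  wlog hβ : 0 < (ℓ₁ (castR q) - c₁) / ℓ₁ (castR v) generalizing v with H
  · have hn : ℓ₁ (castR q) - c₁ ≠ 0 := sub_ne_zero.2 fun h => hq₁ ⟨hq.1, h⟩
    have hk := map_castR_ne_zero_of_add_mem (fun w h₂ h₁ => hℓ w h₁ h₂) hq hqv hv
    refine H (v := -v) (by rwa [← sub_eq_add_neg]) (by rwa [sub_neg_eq_add]) (neg_ne_zero.2 hv)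
      (by rwa [parity_neg]) ?_
    rw [castR_neg, map_neg, div_neg, neg_pos]
    exact lt_of_le_of_ne (not_lt.1 hβ) (div_ne_zero hn hk)
  obtain ⟨w, hw⟩ := parity_eq_zero_iff.1 (parity_add_eq_zero huv)
  rcases le_total ((ℓ₂ (castR p) - c₂) / ℓ₂ (castR u)) ((ℓ₁ (castR q) - c₁) / ℓ₁ (castR v))
    with hαβ | hβα
  · exact exists_latticePoint_of_le hΔ hℓ hp hpu hq hqv hw hα hαβ
  · obtain ⟨g, hg, hg₂, hg₁⟩ := exists_latticePoint_of_le hΔ (fun w h₂ h₁ => hℓ w h₁ h₂) hq hqv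
      hp hpu (by rw [add_comm, hw]) hβ hβα
    exact ⟨g, hg, hg₁, hg₂⟩

end lattice

def lineForm (a b : ℝ) : (Fin 2 → ℝ) →ₗ[ℝ] ℝ where
  toFun x := a * x 0 + b * x 1
  map_add' x y := by simp only [Pi.add_apply]; ring
  map_smul' t x := by simp only [Pi.smul_apply, smul_eq_mul, RingHom.id_apply]; ring

lemma eq_zero_of_lineForm_eq_zero {a₁ b₁ a₂ b₂ : ℝ} (h : a₁ * b₂ - a₂ * b₁ ≠ 0) (w : Fin 2 → ℝ)
    (h₁ : lineForm a₁ b₁ w = 0) (h₂ : lineForm a₂ b₂ w = 0) : w = 0 := by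
  change a₁ * w 0 + b₁ * w 1 = 0 at h₁
  change a₂ * w 0 + b₂ * w 1 = 0 at h₂
  have hw₀ : (a₁ * b₂ - a₂ * b₁) * w 0 = 0 := by linear_combination b₂ * h₁ - b₁ * h₂
  have hw₁ : (a₁ * b₂ - a₂ * b₁) * w 1 = 0 := by linear_combination a₁ * h₂ - a₂ * h₁
  ext i
  fin_cases i
  exacts [(mul_eq_zero.1 hw₀).resolve_left h, (mul_eq_zero.1 hw₁).resolve_left h]

theorem four_points_on_a_line_general (V : Finset (Fin 2 → ℤ)) (Δ : Set (Fin 2 → ℝ))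
    (hΔ : Δ = convexHull ℝ (castR '' (V : Set (Fin 2 → ℤ))))
    (h6 : 6 ≤ {p : Fin 2 → ℤ | castR p ∈ Δ}.ncard)
    (a₁ b₁ c₁ a₂ b₂ c₂ : ℝ) (hnp : a₁ * b₂ - a₂ * b₁ ≠ 0)
    (hcover : ∀ p : Fin 2 → ℤ, castR p ∈ Δ →
      a₁ * (p 0 : ℝ) + b₁ * (p 1 : ℝ) = c₁ ∨ a₂ * (p 0 : ℝ) + b₂ * (p 1 : ℝ) = c₂) :
    4 ≤ {p : Fin 2 → ℤ | castR p ∈ Δ ∧ a₁ * (p 0 : ℝ) + b₁ * (p 1 : ℝ) = c₁}.ncard ∨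
    4 ≤ {p : Fin 2 → ℤ | castR p ∈ Δ ∧ a₂ * (p 0 : ℝ) + b₂ * (p 1 : ℝ) = c₂}.ncard := by
  set S₁ : Set (Fin 2 → ℤ) := castR ⁻¹' (Δ ∩ lineForm a₁ b₁ ⁻¹' {c₁})
  set S₂ : Set (Fin 2 → ℤ) := castR ⁻¹' (Δ ∩ lineForm a₂ b₂ ⁻¹' {c₂})
  change 6 ≤ (castR ⁻¹' Δ).ncard at h6
  change ∀ x, castR x ∈ Δ → lineForm a₁ b₁ (castR x) = c₁ ∨ lineForm a₂ b₂ (castR x) = c₂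
    at hcover
  show 4 ≤ S₁.ncard ∨ 4 ≤ S₂.ncard
  by_contra! hlt
  have hconv : Convex ℝ Δ := hΔ ▸ convex_convexHull ℝ _
  have hunion : castR ⁻¹' Δ = S₁ ∪ S₂ := by
    ext x
    simp only [S₁, S₂, mem_union, mem_preimage, mem_inter_iff, mem_singleton_iff, ← and_or_left,
      iff_self_and]
    exact hcover x
  obtain ⟨h₁, h₂, hdisj⟩ :=
    Set.ncard_eq_of_le_ncard_union (n := 3) (by norm_num) (hunion ▸ h6) (by omega) (by omega)
  have hmid {ℓ : (Fin 2 → ℝ) →ₗ[ℝ] ℝ} {c : ℝ} : MidpointClosed (castR ⁻¹' (Δ ∩ ℓ ⁻¹' {c})) :=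
    (hconv.inter ((convex_singleton c).linear_preimage ℓ)).midpointClosed_preimage_castR
  obtain ⟨p, u, q, v, hS₁, hS₂, hu, hv, huv⟩ := exists_progressions_of_disjoint_image_parity
    (T₁ := S₁) (T₂ := S₂) hmid hmid h₁ h₂ (disjoint_image_parity hconv hcover hdisj)
  obtain ⟨hpu', hp, hpu⟩ : p - u ∈ S₁ ∧ p ∈ S₁ ∧ p + u ∈ S₁ := by simp [hS₁]
  obtain ⟨hqv', hq, hqv⟩ : q - v ∈ S₂ ∧ q ∈ S₂ ∧ q + v ∈ S₂ := by simp [hS₂]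
  obtain ⟨g, hg, hg₁, hg₂⟩ := exists_latticePoint_off_lines hconv (eq_zero_of_lineForm_eq_zero hnp)
    hp hpu hpu' (disjoint_left.1 hdisj hp) hq hqv hqv' (disjoint_right.1 hdisj hq) hu hv huv
  exact (hcover g hg).elim hg₁ hg₂

/-- If all the (at least six) lattice points of a full-dimensional lattice polygon lie on
the union of two non-parallel lines `L₁ : a₁x + b₁y = c₁` and `L₂ : a₂x + b₂y = c₂`,
then one of the two lines contains at least `4` of these lattice points. -/
theorem four_points_on_a_line (V : Finset (Fin 2 → ℤ)) (Δ : Set (Fin 2 → ℝ))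
    (hΔ : Δ = convexHull ℝ (castR '' (V : Set (Fin 2 → ℤ))))
    (hfull : ¬ Collinear ℝ Δ)
    (h6 : 6 ≤ {p : Fin 2 → ℤ | castR p ∈ Δ}.ncard)
    (a₁ b₁ c₁ a₂ b₂ c₂ : ℝ) (hnp : a₁ * b₂ - a₂ * b₁ ≠ 0)
    (hcover : ∀ p : Fin 2 → ℤ, castR p ∈ Δ →
      a₁ * (p 0 : ℝ) + b₁ * (p 1 : ℝ) = c₁ ∨ a₂ * (p 0 : ℝ) + b₂ * (p 1 : ℝ) = c₂) :
    4 ≤ {p : Fin 2 → ℤ | castR p ∈ Δ ∧ a₁ * (p 0 : ℝ) + b₁ * (p 1 : ℝ) = c₁}.ncard ∨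
    4 ≤ {p : Fin 2 → ℤ | castR p ∈ Δ ∧ a₂ * (p 0 : ℝ) + b₂ * (p 1 : ℝ) = c₂}.ncard :=
  four_points_on_a_line_general V Δ hΔ h6 a₁ b₁ c₁ a₂ b₂ c₂ hnp hcover
end

section
/- Let Δ := conv{(0,0),(1,3),(3,1),(4,4)} ⊂ ℝ², so that Δ ∩ ℤ² = {(0,0),(1,1),(1,2),(1,3),(2,1),(2,2),(2,3),(3,1),(3,2),(3,3),(4,4)}. Then: (a) the only polynomial q ∈ ℂ[x,y] of total degree ≤ 2 vanishing at every point of Δ ∩ ℤ² is the zero polynomial; (b) there exists a nonzero polynomial q ∈ ℂ[x,y] of total degree ≤ 3 vanishing at every point of Δ ∩ ℤ². -/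
/-!
The nine points of the grid `{1,2,3}²` lie in `Δ`, and a polynomial of degree at most two in each
variable vanishing on such a grid is zero (combinatorial Nullstellensatz). The remaining points
`(0,0)` and `(4,4)` lie on the diagonal, so `g(x) - g(y)` with `g(t) = (t-1)(t-2)(t-3)` is a cubic
through all eleven points. The lattice points of `Δ` are found from its four edge inequalities.
-/

open MvPolynomial

/-- The lattice polygon `conv{(0,0),(1,3),(3,1),(4,4)}`. -/
noncomputable def ΔEx : Set (Fin 2 → ℝ) :=
  convexHull ℝ {![0, 0], ![1, 3], ![3, 1], ![4, 4]}

/-- The lattice points of `ΔEx`. -/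
def SEx : Set (Fin 2 → ℤ) :=
  {![0, 0], ![1, 1], ![1, 2], ![1, 3], ![2, 1], ![2, 2], ![2, 3],
    ![3, 1], ![3, 2], ![3, 3], ![4, 4]}

section IntGrid

variable {R σ : Type*} [CommRing R]

lemma eq_zero_of_eval_intGrid_eq_zero [IsDomain R] [CharZero R] [Finite σ]
    (q : MvPolynomial σ R) (S : Finset ℤ) (hq : q.totalDegree < S.card)
    (h : ∀ p : σ → ℤ, (∀ i, p i ∈ S) → eval (fun i => (p i : R)) q = 0) : q = 0 := by
  classical
  refine eq_zero_of_eval_zero_at_prod_finset q (fun _ => S.image Int.cast) (fun i => ?_) ?_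
  · rw [Finset.card_image_of_injective _ Int.cast_injective]
    exact (degreeOf_le_totalDegree q i).trans_lt hq
  · intro x hx
    choose p hpS hpx using fun i => Finset.mem_image.1 (hx i)
    simpa only [hpx] using h p hpS

noncomputable def prodXSubC (i : σ) (S : Finset ℤ) : MvPolynomial σ R :=
  ∏ a ∈ S, (X i - C (a : R))

lemma totalDegree_prodXSubC_le [Nontrivial R] (i : σ) (S : Finset ℤ) :
    (prodXSubC i S : MvPolynomial σ R).totalDegree ≤ S.card := by
  calc (prodXSubC i S : MvPolynomial σ R).totalDegree
      ≤ ∑ a ∈ S, (X i - C (a : R) : MvPolynomial σ R).totalDegree := totalDegree_finsetProd _ _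
    _ ≤ ∑ _a ∈ S, 1 :=
      Finset.sum_le_sum fun a _ => (totalDegree_sub_C_le _ _).trans (totalDegree_X i).le
    _ = S.card := by simp

lemma eval_prodXSubC (x : σ → R) (i : σ) (S : Finset ℤ) :
    eval x (prodXSubC i S) = ∏ a ∈ S, (x i - a) := by
  simp [prodXSubC]

lemma eval_prodXSubC_intCast_eq_zero {p : σ → ℤ} {i : σ} {S : Finset ℤ} (h : p i ∈ S) :
    eval (fun j => (p j : R)) (prodXSubC i S) = 0 := by
  rw [eval_prodXSubC]
  exact Finset.prod_eq_zero h (sub_self _)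

lemma eval_prodXSubC_sub_eq_zero {p : σ → ℤ} {i j : σ} {S : Finset ℤ}
    (h : p i = p j ∨ p i ∈ S ∧ p j ∈ S) :
    eval (fun k => (p k : R)) (prodXSubC i S - prodXSubC j S) = 0 := by
  rcases h with hij | ⟨hi, hj⟩
  · simp only [eval_sub, eval_prodXSubC, hij, sub_self]
  · rw [eval_sub, eval_prodXSubC_intCast_eq_zero hi, eval_prodXSubC_intCast_eq_zero hj, sub_zero]

end IntGrid

lemma ΔEx_subset_halfPlanes :
    ΔEx ⊆ {v | v 1 ≤ 3 * v 0 ∧ v 0 ≤ 3 * v 1 ∧ 3 * v 0 - v 1 ≤ 8 ∧ 3 * v 1 - v 0 ≤ 8} := by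
  refine convexHull_min ?_ ?_
  · rintro v (rfl | rfl | rfl | rfl | rfl) <;> norm_num
  · rintro x ⟨hx₁, hx₂, hx₃, hx₄⟩ y ⟨hy₁, hy₂, hy₃, hy₄⟩ a b ha hb hab
    simp only [Set.mem_ofPred_eq, Pi.add_apply, Pi.smul_apply, smul_eq_mul]
    refine ⟨?_, ?_, ?_, ?_⟩ <;> nlinarith

lemma mem_SEx_of_le (p : Fin 2 → ℤ) (h₁ : p 1 ≤ 3 * p 0) (h₂ : p 0 ≤ 3 * p 1)
    (h₃ : 3 * p 0 - p 1 ≤ 8) (h₄ : 3 * p 1 - p 0 ≤ 8) : p ∈ SEx := by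
  obtain ⟨a, b, rfl⟩ : ∃ a b, p = ![a, b] := ⟨p 0, p 1, by ext i; fin_cases i <;> rfl⟩
  simp only [Matrix.cons_val_zero, Matrix.cons_val_one] at h₁ h₂ h₃ h₄
  obtain ⟨ha₀, ha₄, hb₀, hb₄⟩ : 0 ≤ a ∧ a ≤ 4 ∧ 0 ≤ b ∧ b ≤ 4 := by omega
  interval_cases a <;> interval_cases b <;> first | omega | simp [SEx]

lemma castR_mem_ΔEx_of_weights {p : Fin 2 → ℤ} (a b c d : ℝ)
    (h : 0 ≤ a ∧ 0 ≤ b ∧ 0 ≤ c ∧ 0 ≤ d ∧ a + b + c + d = 1 ∧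
      b + 3 * c + 4 * d = p 0 ∧ 3 * b + c + 4 * d = p 1) :
    castR p ∈ ΔEx := by
  obtain ⟨ha, hb, hc, hd, hsum, h₀, h₁⟩ := h
  have hp : castR p = ∑ i, ![a, b, c, d] i • ![![0, 0], ![1, 3], ![3, 1], ![4, 4]] i := by
    ext i
    fin_cases i <;> simp [castR, Fin.sum_univ_four, ← h₀, ← h₁] <;> ring
  rw [hp]
  refine (convex_convexHull ℝ _).sum_mem (fun i _ => ?_) ?_ (fun i _ => subset_convexHull ℝ _ ?_)
  · fin_cases i <;> assumption
  · simp [Fin.sum_univ_four, ← hsum, add_assoc]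
  · fin_cases i <;> simp

lemma setOf_castR_mem_ΔEx : {p : Fin 2 → ℤ | castR p ∈ ΔEx} = SEx := by
  ext p
  refine ⟨fun hp => ?_, fun hp => ?_⟩
  · obtain ⟨h₁, h₂, h₃, h₄⟩ := ΔEx_subset_halfPlanes hp
    simp only [castR] at h₁ h₂ h₃ h₄
    exact mem_SEx_of_le p (by exact_mod_cast h₁) (by exact_mod_cast h₂) (by exact_mod_cast h₃)
      (by exact_mod_cast h₄)
  · rcases hp with rfl | rfl | rfl | rfl | rfl | rfl | rfl | rfl | rfl | rfl | rfl
    · exact castR_mem_ΔEx_of_weights 1 0 0 0 (by norm_num)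
    · exact castR_mem_ΔEx_of_weights (3/4) 0 0 (1/4) (by norm_num)
    · exact castR_mem_ΔEx_of_weights (1/4) (5/8) (1/8) 0 (by norm_num)
    · exact castR_mem_ΔEx_of_weights 0 1 0 0 (by norm_num)
    · exact castR_mem_ΔEx_of_weights (1/4) (1/8) (5/8) 0 (by norm_num)
    · exact castR_mem_ΔEx_of_weights (1/2) 0 0 (1/2) (by norm_num)
    · exact castR_mem_ΔEx_of_weights (1/8) (1/2) 0 (3/8) (by norm_num)
    · exact castR_mem_ΔEx_of_weights 0 0 1 0 (by norm_num)
    · exact castR_mem_ΔEx_of_weights (1/8) 0 (1/2) (3/8) (by norm_num)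
    · exact castR_mem_ΔEx_of_weights (1/4) 0 0 (3/4) (by norm_num)
    · exact castR_mem_ΔEx_of_weights 0 0 0 1 (by norm_num)

lemma mem_SEx_of_mem_grid (p : Fin 2 → ℤ) (hp : ∀ i, p i ∈ ({1, 2, 3} : Finset ℤ)) : p ∈ SEx := by
  have h₀ := hp 0
  have h₁ := hp 1
  simp only [Finset.mem_insert, Finset.mem_singleton] at h₀ h₁
  exact mem_SEx_of_le p (by omega) (by omega) (by omega) (by omega)

lemma SEx_subset_diagonal_union_grid {p : Fin 2 → ℤ} (hp : p ∈ SEx) :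
    p 0 = p 1 ∨ p 0 ∈ ({1, 2, 3} : Finset ℤ) ∧ p 1 ∈ ({1, 2, 3} : Finset ℤ) := by
  rcases hp with rfl | rfl | rfl | rfl | rfl | rfl | rfl | rfl | rfl | rfl | rfl <;> simp

/-- The lattice points of `conv{(0,0),(1,3),(3,1),(4,4)}` are the eleven listed points;
no nonzero conic passes through all of them, but some nonzero cubic does. -/
theorem example_cubic_no_conic :
    ({p : Fin 2 → ℤ | castR p ∈ ΔEx} = SEx) ∧
    (∀ q : MvPolynomial (Fin 2) ℂ, q.totalDegree ≤ 2 →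
        (∀ p ∈ SEx, MvPolynomial.eval (fun i => (p i : ℂ)) q = 0) → q = 0) ∧
    (∃ q : MvPolynomial (Fin 2) ℂ, q ≠ 0 ∧ q.totalDegree ≤ 3 ∧
        ∀ p ∈ SEx, MvPolynomial.eval (fun i => (p i : ℂ)) q = 0) := by
  have hcard : ({1, 2, 3} : Finset ℤ).card = 3 := rfl
  refine ⟨setOf_castR_mem_ΔEx, fun q hq hv => ?_, ?_⟩
  · exact eq_zero_of_eval_intGrid_eq_zero q {1, 2, 3} (by omega)
      fun p hp => hv p (mem_SEx_of_mem_grid p hp)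
  · refine ⟨prodXSubC 0 {1, 2, 3} - prodXSubC 1 {1, 2, 3}, fun h => ?_, ?_,
      fun p hp => eval_prodXSubC_sub_eq_zero (SEx_subset_diagonal_union_grid hp)⟩
    · have h01 := congrArg (eval ![0, 1]) h
      simp [eval_prodXSubC] at h01
    · refine (totalDegree_sub _ _).trans (max_le ?_ ?_) <;>
        exact hcard ▸ totalDegree_prodXSubC_le _ _
end

section
/- Let S := {(0,0),(1,1),(1,2),(1,3),(2,1),(2,2),(2,3),(3,1),(3,2),(3,3),(4,4)} ⊂ ℤ² (the set of lattice points of the polygon conv{(0,0),(1,3),(3,1),(4,4)}). Then there is no nonzero vector v ∈ ℂ² for which there exists a polynomial F ∈ ℂ[x,y] of total degree ≤ 4, vanishing at every point of S, whose degree-4 homogeneous component equals (v₁x+v₂y)⁴. (Equivalently, by the main theorem, the 4th fundamental form at the point 1 of the toric surface defined by S has empty base locus.) -/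
/-!
Write `F = G + L` with `L = (v₀x + v₁y)⁴`; the hypothesis on the top component says that
`deg G ≤ 3`. Finite differences of order `k` kill polynomials of total degree `< k`, and `S`
contains the block `{1,2,3}²` and the diagonal points `(t, t)`, `0 ≤ t ≤ 4`. The mixed
difference `Δₓ² Δᵧ²` on the block and the fourth difference along the diagonal vanish on `F`
(which vanishes on `S`) and on `G`, hence on `L`; they evaluate to `24 v₀² v₁²` and
`24 (v₀ + v₁)⁴`, so `v = 0`.
-/

open MvPolynomial

open fwdDiff Finset

section FwdDiff

variable {M G : Type*} [AddCommMonoid M] [AddCommGroup G]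

theorem fwdDiff_iter_eq_zero_of_shift_eq_zero {h : M} {f : M → G} {n : ℕ} {y : M}
    (hf : ∀ k ≤ n, f (y + k • h) = 0) : Δ_[h] ^[n] f y = 0 := by
  rw [fwdDiff_iter_eq_sum_shift]
  exact sum_eq_zero fun k hk => by rw [hf k (Nat.lt_succ_iff.mp (mem_range.mp hk)), smul_zero]

theorem fwdDiff_iter_add_apply (h : M) (f g : M → G) (n : ℕ) (y : M) :
    Δ_[h] ^[n] (fun x => f x + g x) y = Δ_[h] ^[n] f y + Δ_[h] ^[n] g y :=
  congrFun (fwdDiff_iter_add h f g n) y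

theorem fwdDiff_iter_const_mul_apply {R : Type*} [Ring R] (h : M) (c : R) (f : M → R) (n : ℕ)
    (y : M) : Δ_[h] ^[n] (fun x => c * f x) y = c * Δ_[h] ^[n] f y :=
  congrFun (fwdDiff_iter_const_smul h c f n) y

theorem fwdDiff_iter_mul_const_apply {R : Type*} [CommRing R] (h : M) (c : R) (f : M → R)
    (n : ℕ) (y : M) : Δ_[h] ^[n] (fun x => f x * c) y = Δ_[h] ^[n] f y * c := by
  simp only [mul_comm _ c, fwdDiff_iter_const_mul_apply]

theorem fwdDiff_iter_two_apply {R : Type*} [CommRing R] (f : R → R) (x : R) :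
    Δ_[1] ^[2] f x = f (x + 2) - 2 * f (x + 1) + f x := by
  simp only [Function.iterate_succ_apply', Function.iterate_zero_apply, fwdDiff]
  ring_nf

theorem fwdDiff_iter_four_apply {R : Type*} [CommRing R] (f : R → R) (x : R) :
    Δ_[1] ^[4] f x = f (x + 4) - 4 * f (x + 3) + 6 * f (x + 2) - 4 * f (x + 1) + f x := by
  simp only [Function.iterate_succ_apply', Function.iterate_zero_apply, fwdDiff]
  ring_nf

end FwdDiff

section TotalDegree

variable {σ R : Type*}

theorem totalDegree_sub_homogeneousComponent_le [CommRing R] {F : MvPolynomial σ R} {n : ℕ}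
    (hF : F.totalDegree ≤ n + 1) : (F - homogeneousComponent (n + 1) F).totalDegree ≤ n := by
  refine Finset.sup_le fun d hd => ?_
  have hcoeff := mem_support_iff.mp hd
  rw [coeff_sub, coeff_homogeneousComponent] at hcoeff
  have hdeg : d.degree ≠ n + 1 := fun h => by simp [h] at hcoeff
  have hmem : d ∈ F.support := mem_support_iff.mpr (by simpa [hdeg] using hcoeff)
  rw [Finsupp.degree_apply] at hdeg
  exact Nat.le_of_lt_succ (lt_of_le_of_ne ((le_totalDegree hmem).trans hF) hdeg)

theorem AddMonoidHom.map_eq_zero_of_totalDegree_lt [CommSemiring R] {M : Type*}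
    [AddCommMonoid M] (φ : MvPolynomial σ R →+ M) {n : ℕ}
    (hφ : ∀ d c, d.degree < n → φ (monomial d c) = 0) {f : MvPolynomial σ R}
    (hf : f.totalDegree < n) : φ f = 0 := by
  rw [f.as_sum, map_sum]
  exact sum_eq_zero fun d hd => hφ d _ ((le_totalDegree hd).trans_lt hf)

end TotalDegree

section Differences

variable {σ R : Type*} [CommRing R]

noncomputable def diagFwdDiff (n : ℕ) (x : R) : MvPolynomial σ R →+ R where
  toFun f := Δ_[1] ^[n] (fun t => eval (fun _ => t) f) x
  map_zero' := fwdDiff_iter_eq_zero_of_shift_eq_zero fun _ _ => map_zero _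
  map_add' f g := by simp only [map_add, fwdDiff_iter_add_apply]

noncomputable def mixedFwdDiff (m n : ℕ) (x y : R) : MvPolynomial (Fin 2) R →+ R where
  toFun f := Δ_[1] ^[m] (fun s => Δ_[1] ^[n] (fun t => eval ![s, t] f) y) x
  map_zero' := fwdDiff_iter_eq_zero_of_shift_eq_zero fun _ _ =>
    fwdDiff_iter_eq_zero_of_shift_eq_zero fun _ _ => map_zero _
  map_add' f g := by simp only [map_add, fwdDiff_iter_add_apply]

theorem diagFwdDiff_monomial (n : ℕ) (x : R) (d : σ →₀ ℕ) (c : R) :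
    diagFwdDiff n x (monomial d c) = c * Δ_[1] ^[n] (· ^ d.degree) x := by
  simp only [diagFwdDiff, AddMonoidHom.coe_mk, ZeroHom.coe_mk, eval_monomial, Finsupp.prod,
    prod_pow_eq_pow_sum, fwdDiff_iter_const_mul_apply, Finsupp.degree_apply]

theorem mixedFwdDiff_monomial (m n : ℕ) (x y : R) (d : Fin 2 →₀ ℕ) (c : R) :
    mixedFwdDiff m n x y (monomial d c) =
      c * (Δ_[1] ^[m] (· ^ d 0) x * Δ_[1] ^[n] (· ^ d 1) y) := by
  simp only [mixedFwdDiff, AddMonoidHom.coe_mk, ZeroHom.coe_mk, eval_monomial,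
    Finsupp.prod_fintype _ _ (fun _ => pow_zero _), Fin.prod_univ_two, Matrix.cons_val_zero,
    Matrix.cons_val_one, fwdDiff_iter_const_mul_apply, fwdDiff_iter_mul_const_apply]

theorem diagFwdDiff_eq_zero_of_totalDegree_lt {n : ℕ} (x : R) {f : MvPolynomial σ R}
    (hf : f.totalDegree < n) : diagFwdDiff n x f = 0 := by
  refine (diagFwdDiff n x).map_eq_zero_of_totalDegree_lt (fun d c hd => ?_) hf
  rw [diagFwdDiff_monomial, fwdDiff_iter_pow_eq_zero_of_lt hd, Pi.zero_apply, mul_zero]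

theorem mixedFwdDiff_eq_zero_of_totalDegree_lt {m n : ℕ} (x y : R) {f : MvPolynomial (Fin 2) R}
    (hf : f.totalDegree < m + n) : mixedFwdDiff m n x y f = 0 := by
  refine (mixedFwdDiff m n x y).map_eq_zero_of_totalDegree_lt (fun d c hd => ?_) hf
  rw [Finsupp.degree_eq_sum, Fin.sum_univ_two] at hd
  rw [mixedFwdDiff_monomial]
  rcases lt_or_ge (d 0) m with h0 | h0
  · rw [fwdDiff_iter_pow_eq_zero_of_lt h0, Pi.zero_apply, zero_mul, mul_zero]
  · rw [fwdDiff_iter_pow_eq_zero_of_lt (j := d 1) (by omega), Pi.zero_apply, mul_zero, mul_zero]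

theorem diagFwdDiff_linearForm_pow_four (a b x : R) :
    diagFwdDiff 4 x ((C a * X 0 + C b * X 1 : MvPolynomial (Fin 2) R) ^ 4) =
      24 * (a + b) ^ 4 := by
  simp only [diagFwdDiff, AddMonoidHom.coe_mk, ZeroHom.coe_mk, fwdDiff_iter_four_apply, map_pow,
    map_add, map_mul, eval_C, eval_X]
  ring

theorem mixedFwdDiff_linearForm_pow_four (a b x y : R) :
    mixedFwdDiff 2 2 x y ((C a * X 0 + C b * X 1) ^ 4) = 24 * a ^ 2 * b ^ 2 := by
  simp only [mixedFwdDiff, AddMonoidHom.coe_mk, ZeroHom.coe_mk, fwdDiff_iter_two_apply, map_pow,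
    map_add, map_mul, eval_C, eval_X, Matrix.cons_val_zero, Matrix.cons_val_one]
  ring

end Differences

theorem diagFwdDiff_eq_zero_of_vanishing_on_SEx {F : MvPolynomial (Fin 2) ℂ}
    (hF : ∀ p ∈ SEx, eval (fun i => (p i : ℂ)) F = 0) : diagFwdDiff 4 (0 : ℂ) F = 0 :=
  fwdDiff_iter_eq_zero_of_shift_eq_zero fun k hk => by
    have := hF ![k, k] (by interval_cases k <;> simp [SEx])
    convert this using 2
    congr 1
    funext i
    fin_cases i <;> simp

theorem mixedFwdDiff_eq_zero_of_vanishing_on_SEx {F : MvPolynomial (Fin 2) ℂ}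
    (hF : ∀ p ∈ SEx, eval (fun i => (p i : ℂ)) F = 0) : mixedFwdDiff 2 2 (1 : ℂ) 1 F = 0 :=
  fwdDiff_iter_eq_zero_of_shift_eq_zero fun k hk =>
    fwdDiff_iter_eq_zero_of_shift_eq_zero fun l hl => by
      have := hF ![1 + k, 1 + l] (by interval_cases k <;> interval_cases l <;> simp [SEx])
      convert this using 2
      congr 1
      funext i
      fin_cases i <;> simp

/-- There is no nonzero `v ∈ ℂ²` and polynomial `F` of total degree at most `4` vanishing
on `SEx` whose degree-`4` homogeneous component is `(v₁x + v₂y)⁴`: the `4`-th fundamental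
form of the toric surface defined by `SEx` at `𝟏` has empty base locus. -/
theorem no_base_point_quartic :
    ¬ ∃ v : Fin 2 → ℂ, v ≠ 0 ∧
      ∃ F : MvPolynomial (Fin 2) ℂ, F.totalDegree ≤ 4 ∧
        (∀ p ∈ SEx, MvPolynomial.eval (fun i => (p i : ℂ)) F = 0) ∧
        MvPolynomial.homogeneousComponent 4 F =
          (MvPolynomial.C (v 0) * MvPolynomial.X 0 +
            MvPolynomial.C (v 1) * MvPolynomial.X 1) ^ 4 := by
  rintro ⟨v, hv, F, hdeg, hvan, hhom⟩
  have hlow : (F - (C (v 0) * X 0 + C (v 1) * X 1) ^ 4).totalDegree < 4 :=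
    Nat.lt_succ_of_le (hhom ▸ totalDegree_sub_homogeneousComponent_le hdeg)
  have hdiag := diagFwdDiff_eq_zero_of_totalDegree_lt (0 : ℂ) hlow
  rw [map_sub, diagFwdDiff_eq_zero_of_vanishing_on_SEx hvan, zero_sub, neg_eq_zero,
    diagFwdDiff_linearForm_pow_four] at hdiag
  have hmixed := mixedFwdDiff_eq_zero_of_totalDegree_lt (m := 2) (n := 2) (1 : ℂ) 1 hlow
  rw [map_sub, mixedFwdDiff_eq_zero_of_vanishing_on_SEx hvan, zero_sub, neg_eq_zero,
    mixedFwdDiff_linearForm_pow_four] at hmixed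
  have hsum : v 0 + v 1 = 0 :=
    pow_eq_zero_iff four_ne_zero |>.mp (by linear_combination hdiag / 24)
  have hprod : v 0 * v 1 = 0 :=
    pow_eq_zero_iff two_ne_zero |>.mp (by linear_combination hmixed / 24)
  have h0 : v 0 = 0 :=
    pow_eq_zero_iff two_ne_zero |>.mp (by linear_combination v 0 * hsum - hprod)
  have h1 : v 1 = 0 := by linear_combination hsum - h0
  exact hv (funext fun i => by fin_cases i <;> simp [h0, h1])
end

section
/- Let k ≥ 1 and let Δ ⊂ ℝ^k be a full-dimensional lattice polytope. Suppose there exist a nonzero linear form l : ℝ^k → ℝ and an affine function a : ℝ^k → ℝ such that l(p)² = a(p) for every p ∈ Δ ∩ ℤ^k. Then no point of ℤ^k lies in the topological interior of Δ (i.e. Δ is a hollow polytope). -/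
open Filter Topology

section Quadric

variable {E : Type*} [AddCommGroup E] [Module ℝ E] (l : E →ₗ[ℝ] ℝ) (a : E →ᵃ[ℝ] ℝ)

theorem convexOn_sq_sub_affine : ConvexOn ℝ Set.univ fun y => l y ^ 2 - a y :=
  ((even_two.convexOn_pow).comp_affineMap l.toAffineMap).sub
    ((concaveOn_id convex_univ).comp_affineMap a)

theorem convex_setOf_sq_le : Convex ℝ {y | l y ^ 2 ≤ a y} := by
  simpa [sub_nonpos] using (convexOn_sq_sub_affine l a).convex_le 0

theorem affine_sub_sq_add_affine_sub_sq (x v : E) :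
    (a (x + v) - l (x + v) ^ 2) + (a (x - v) - l (x - v) ^ 2) =
      2 * (a x - l x ^ 2) - 2 * l v ^ 2 := by
  have hadd : a (x + v) = a.linear v + a x := by
    rw [add_comm x v]
    exact a.map_vadd x v
  have hsub : a (x - v) = -a.linear v + a x := by
    rw [sub_eq_add_neg, add_comm x, ← map_neg]
    exact a.map_vadd x (-v)
  rw [hadd, hsub, map_add, map_sub]
  ring

variable [TopologicalSpace E] [IsTopologicalAddGroup E] [ContinuousSMul ℝ E]

theorem exists_lt_sq_of_mem_interior (hl : l ≠ 0) {S : Set E} {x : E} (hx : x ∈ interior S)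
    (hx0 : l x ^ 2 = a x) : ∃ y ∈ S, a y < l y ^ 2 := by
  obtain ⟨v, hv⟩ : ∃ v, l v ≠ 0 := by
    by_contra! h
    exact hl (LinearMap.ext h)
  have hline : ∀ w : E, ∀ᶠ t in 𝓝 (0 : ℝ), x + t • w ∈ S := fun w => by
    have : Tendsto (fun t : ℝ => x + t • w) (𝓝 0) (𝓝 x) := by
      simpa using ((continuous_id.smul continuous_const).const_add x).tendsto (0 : ℝ)
    exact this.eventually (mem_interior_iff_mem_nhds.mp hx)
  obtain ⟨t, ⟨hplus, hminus⟩, ht⟩ :=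
    (((hline v).and (hline (-v))).filter_mono nhdsWithin_le_nhds |>.and
      (self_mem_nhdsWithin : {t : ℝ | t ≠ 0} ∈ 𝓝[≠] 0)).exists
  rw [smul_neg, ← sub_eq_add_neg] at hminus
  have hsum := affine_sub_sq_add_affine_sub_sq l a x (t • v)
  have hpos : 0 < l (t • v) ^ 2 := by
    rw [map_smul, smul_eq_mul]
    exact sq_pos_of_ne_zero (mul_ne_zero ht hv)
  by_contra! h
  have := h _ hplus
  have := h _ hminus
  linarith

end Quadric

theorem hollow_of_parabola_general (k : ℕ)
    (V : Finset (Fin k → ℤ)) (Δ : Set (Fin k → ℝ))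
    (hΔ : Δ = convexHull ℝ (castR '' (V : Set (Fin k → ℤ))))
    (l : (Fin k → ℝ) →ₗ[ℝ] ℝ) (hl : l ≠ 0)
    (a : (Fin k → ℝ) →ᵃ[ℝ] ℝ)
    (hq : ∀ p : Fin k → ℤ, castR p ∈ Δ → (l (castR p)) ^ 2 = a (castR p)) :
    ∀ p : Fin k → ℤ, castR p ∉ interior Δ := by
  intro p hp
  have hΔle : Δ ⊆ {y | l y ^ 2 ≤ a y} := by
    rw [hΔ]
    refine convexHull_min ?_ (convex_setOf_sq_le l a)
    rintro _ ⟨q, hqV, rfl⟩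
    exact (hq q (hΔ ▸ subset_convexHull ℝ _ ⟨q, hqV, rfl⟩)).le
  obtain ⟨y, hyΔ, hy⟩ := exists_lt_sq_of_mem_interior l a hl hp (hq p (interior_subset hp))
  exact hy.not_ge (hΔle hyΔ)

/-- If the lattice points of a full-dimensional lattice polytope `Δ ⊆ ℝ^k` lie on a
quadric `l(x)² = a(x)` with `l` a nonzero linear form and `a` an affine function, then
`Δ` is hollow: it has no lattice point in its topological interior. -/
theorem hollow_of_parabola (k : ℕ) (hk : 1 ≤ k)
    (V : Finset (Fin k → ℤ)) (Δ : Set (Fin k → ℝ))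
    (hΔ : Δ = convexHull ℝ (castR '' (V : Set (Fin k → ℤ))))
    (hfull : affineSpan ℝ Δ = ⊤)
    (l : (Fin k → ℝ) →ₗ[ℝ] ℝ) (hl : l ≠ 0)
    (a : (Fin k → ℝ) →ᵃ[ℝ] ℝ)
    (hq : ∀ p : Fin k → ℤ, castR p ∈ Δ → (l (castR p)) ^ 2 = a (castR p)) :
    ∀ p : Fin k → ℤ, castR p ∉ interior Δ :=
  hollow_of_parabola_general k V Δ hΔ l hl a hq
end

section
/- Let T := conv{(0,0,0),(572,286,143),(390,195,−585),(495,−330,−165)} ⊂ ℝ³. Then: (a) every point (x,y,z) ∈ T satisfies 0 ≤ x ≤ 572; (b) the lattice points (x,y,z) ∈ T ∩ ℤ³ with x ∈ {0,1,572} are exactly (0,0,0), (1,0,0), (1,0,−1) and (572,286,143), and each of these four points satisfies x² − x − 1142y = 0. Consequently, every lattice point (x,y,z) ∈ T ∩ ℤ³ satisfies x² − x − 1142y = 0 or 2 ≤ x ≤ 571. -/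
/-- The tetrahedron `conv{(0,0,0),(572,286,143),(390,195,−585),(495,−330,−165)}`,
a `GL(3,ℤ)`-transform of the Riemann–Roch polytope of `ℙ(7,11,13,15)`. -/
noncomputable def TEx : Set (Fin 3 → ℝ) :=
  convexHull ℝ {![0, 0, 0], ![572, 286, 143], ![390, 195, -585], ![495, -330, -165]}

def TExFacets {R : Type*} [Ring R] [LE R] (x : Fin 3 → R) : Prop :=
  0 ≤ x 0 - 2 * x 1 ∧ 0 ≤ x 1 - 2 * x 2 ∧ 0 ≤ x 0 + x 1 + x 2 ∧ 4 * x 0 - x 2 ≤ 2145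

lemma convex_setOf_tExFacets {R : Type*} [Field R] [LinearOrder R] [IsStrictOrderedRing R] :
    Convex R {x : Fin 3 → R | TExFacets x} := by
  rintro x ⟨hx₁, hx₂, hx₃, hx₄⟩ y ⟨hy₁, hy₂, hy₃, hy₄⟩ a b ha hb hab
  simp only [Set.mem_ofPred_eq, TExFacets, Pi.add_apply, Pi.smul_apply, smul_eq_mul]
  refine ⟨by nlinarith, by nlinarith, by nlinarith, by nlinarith⟩

lemma TExFacets.first_coord_mem_Icc {R : Type*} [CommRing R] [LinearOrder R]
    [IsStrictOrderedRing R] {x : Fin 3 → R} (hx : TExFacets x) : 0 ≤ x 0 ∧ x 0 ≤ 572 := by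
  obtain ⟨h₁, h₂, h₃, h₄⟩ := hx
  constructor <;> linarith

lemma tExFacets_castR_iff (p : Fin 3 → ℤ) : TExFacets (castR p) ↔ TExFacets p := by
  simp only [TExFacets, castR]
  norm_cast

lemma TEx_subset_tExFacets : TEx ⊆ {x | TExFacets x} := by
  refine convexHull_min ?_ convex_setOf_tExFacets
  rintro v (rfl | rfl | rfl | rfl) <;> norm_num [TExFacets, Matrix.cons_val_two]

lemma tExFacets_subset_TEx : {x | TExFacets x} ⊆ TEx := by
  rintro x ⟨h₁, h₂, h₃, h₄⟩
  let v : Fin 4 → Fin 3 → ℝ :=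
    ![![0, 0, 0], ![572, 286, 143], ![390, 195, -585], ![495, -330, -165]]
  let w : Fin 4 → ℝ := ![1 - (4 * x 0 - x 2) / 2145, (x 0 + x 1 + x 2) / 1001,
    (x 1 - 2 * x 2) / 1365, (x 0 - 2 * x 1) / 1155]
  have hw : ∀ i ∈ Finset.univ, 0 ≤ w i := by
    intro i _
    fin_cases i <;>
      simp only [w, Fin.reduceFinMk, Fin.zero_eta, Fin.mk_one, Matrix.cons_val] <;> linarith
  have hsum : ∑ i, w i = 1 := by
    simp only [w, Fin.sum_univ_four, Matrix.cons_val]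
    ring
  have hx : ∑ i, w i • v i = x := by
    ext j
    fin_cases j <;>
      simp only [v, w, Finset.sum_apply, Fin.sum_univ_four, Pi.smul_apply, smul_eq_mul,
        Fin.reduceFinMk, Fin.zero_eta, Fin.mk_one, Matrix.cons_val] <;>
      ring
  rw [← hx]
  refine (convex_convexHull ℝ _).sum_mem hw hsum fun i _ => subset_convexHull ℝ _ ?_
  fin_cases i <;> simp [v]

lemma mem_TEx_iff {x : Fin 3 → ℝ} : x ∈ TEx ↔ TExFacets x :=
  ⟨fun h => TEx_subset_tExFacets h, fun h => tExFacets_subset_TEx h⟩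

lemma castR_mem_TEx_iff {p : Fin 3 → ℤ} : castR p ∈ TEx ↔ TExFacets p := by
  rw [mem_TEx_iff, tExFacets_castR_iff]

lemma tExFacets_and_slices_iff (p : Fin 3 → ℤ) :
    TExFacets p ∧ (p 0 = 0 ∨ p 0 = 1 ∨ p 0 = 572) ↔
      p ∈ ({![0, 0, 0], ![1, 0, 0], ![1, 0, -1], ![572, 286, 143]} : Set (Fin 3 → ℤ)) := by
  obtain ⟨a, b, c, rfl⟩ : ∃ a b c, p = ![a, b, c] :=
    ⟨p 0, p 1, p 2, by ext i; fin_cases i <;> rfl⟩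
  simp only [TExFacets, Set.mem_insert_iff, Set.mem_singleton_iff, Matrix.cons_val_zero,
    Matrix.cons_val_one, Matrix.cons_val_two, Matrix.tail_cons, Matrix.head_cons,
    Matrix.vecCons_inj, and_true]
  omega

/-- (a) On `TEx` the first coordinate ranges in `[0, 572]`; (b) the lattice points of
`TEx` with first coordinate `0`, `1` or `572` are exactly the four listed points, each of
which satisfies `x² − x − 1142y = 0`; consequently every lattice point of `TEx` satisfies
`x² − x − 1142y = 0` or `2 ≤ x ≤ 571`. -/
theorem tetrahedron_slices :
    (∀ x ∈ TEx, 0 ≤ x 0 ∧ x 0 ≤ 572) ∧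
    ({p : Fin 3 → ℤ | castR p ∈ TEx ∧ (p 0 = 0 ∨ p 0 = 1 ∨ p 0 = 572)} =
      ({![0, 0, 0], ![1, 0, 0], ![1, 0, -1], ![572, 286, 143]} : Set (Fin 3 → ℤ))) ∧
    (∀ p ∈ ({![0, 0, 0], ![1, 0, 0], ![1, 0, -1], ![572, 286, 143]} : Set (Fin 3 → ℤ)),
      (p 0) ^ 2 - p 0 - 1142 * p 1 = 0) ∧
    (∀ p : Fin 3 → ℤ, castR p ∈ TEx →
      (p 0) ^ 2 - p 0 - 1142 * p 1 = 0 ∨ (2 ≤ p 0 ∧ p 0 ≤ 571)) := by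
  have slices : {p : Fin 3 → ℤ | castR p ∈ TEx ∧ (p 0 = 0 ∨ p 0 = 1 ∨ p 0 = 572)} =
      ({![0, 0, 0], ![1, 0, 0], ![1, 0, -1], ![572, 286, 143]} : Set (Fin 3 → ℤ)) := by
    ext p
    rw [Set.mem_ofPred_eq, castR_mem_TEx_iff, tExFacets_and_slices_iff]
  have on_parabola : ∀ p ∈ ({![0, 0, 0], ![1, 0, 0], ![1, 0, -1], ![572, 286, 143]} :
      Set (Fin 3 → ℤ)), (p 0) ^ 2 - p 0 - 1142 * p 1 = 0 := by
    rintro p (rfl | rfl | rfl | rfl) <;> norm_num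
  refine ⟨fun x hx => (mem_TEx_iff.1 hx).first_coord_mem_Icc, slices, on_parabola, ?_⟩
  intro p hp
  obtain ⟨hp₀, hp₅₇₂⟩ := (castR_mem_TEx_iff.1 hp).first_coord_mem_Icc
  by_cases hslice : p 0 = 0 ∨ p 0 = 1 ∨ p 0 = 572
  · exact Or.inl (on_parabola p (slices ▸ ⟨hp, hslice⟩))
  · exact Or.inr (by omega)
end

section
/- Let T := conv{(0,0,0),(572,286,143),(390,195,−585),(495,−330,−165)} ⊂ ℝ³. Then there exists a polynomial F ∈ ℚ[x,y,z] of total degree 572 whose degree-572 homogeneous component equals x^572 and which vanishes at every point of T ∩ ℤ³. -/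
open MvPolynomial

/-!
The facet inequalities `2y ≤ x`, `2z ≤ y`, `0 ≤ x + y + z`, `4x - z ≤ 2145` of `TEx` force every
lattice point of `TEx` to have `0 ≤ x ≤ 572`; on the slices `x = 0`, `x = 1` and `x = 572` they
leave only `y = 0`, `y = 0` and `y = 286`. So `F = (x² - x - 1142 y) · ∏_{j=2}^{571} (x - j)`
vanishes there: the quadric passes through `(0,0)`, `(1,0)`, `(572,286)` in the `(x,y)`-plane and
the product kills all remaining slices. Its top-degree form is `x² · x⁵⁷⁰`.
-/

namespace MvPolynomial

section CommSemiring

variable {σ R : Type*} [CommSemiring R]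

theorem homogeneousComponent_mul_of_totalDegree_le {p q : MvPolynomial σ R} {m n : ℕ}
    (hp : p.totalDegree ≤ m) (hq : q.totalDegree ≤ n) :
    homogeneousComponent (m + n) (p * q) =
      homogeneousComponent m p * homogeneousComponent n q := by
  classical
  ext d
  simp only [coeff_homogeneousComponent, coeff_mul]
  split_ifs with hd
  · refine Finset.sum_congr rfl fun x hx => ?_
    have hdeg : x.1.degree + x.2.degree = m + n := by
      rw [← map_add, Finset.HasAntidiagonal.mem_antidiagonal.mp hx, hd]
    by_cases h₁ : x.1.degree = m
    · rw [if_pos h₁, if_pos (by omega)]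
    rw [if_neg h₁, zero_mul]
    rcases Nat.lt_or_gt_of_ne h₁ with h₁ | h₁
    · rw [coeff_eq_zero_of_totalDegree_lt (f := q) (show q.totalDegree < x.2.degree by omega),
        mul_zero]
    · rw [coeff_eq_zero_of_totalDegree_lt (f := p) (show p.totalDegree < x.1.degree by omega),
        zero_mul]
  · refine (Finset.sum_eq_zero fun x hx => ?_).symm
    have hdeg : x.1.degree + x.2.degree = d.degree := by
      rw [← map_add, Finset.HasAntidiagonal.mem_antidiagonal.mp hx]
    split_ifs <;> simp_all

theorem homogeneousComponent_prod_of_totalDegree_le {ι : Type*} (s : Finset ι)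
    (f : ι → MvPolynomial σ R) (n : ι → ℕ) (h : ∀ i ∈ s, (f i).totalDegree ≤ n i) :
    homogeneousComponent (∑ i ∈ s, n i) (∏ i ∈ s, f i) =
      ∏ i ∈ s, homogeneousComponent (n i) (f i) := by
  classical
  induction s using Finset.induction_on with
  | empty => simp
  | insert a s ha ih =>
    have hs : ∀ i ∈ s, (f i).totalDegree ≤ n i := fun i hi => h i (by simp [hi])
    rw [Finset.prod_insert ha, Finset.sum_insert ha, Finset.prod_insert ha,
      homogeneousComponent_mul_of_totalDegree_le (h a (by simp)), ih hs]
    exact (totalDegree_finsetProd s f).trans (Finset.sum_le_sum hs)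

theorem totalDegree_eq_of_homogeneousComponent_ne_zero {φ : MvPolynomial σ R} {n : ℕ}
    (h : φ.totalDegree ≤ n) (hn : homogeneousComponent n φ ≠ 0) : φ.totalDegree = n :=
  h.antisymm <| not_lt.mp fun hlt => hn (homogeneousComponent_eq_zero n φ hlt)

end CommSemiring

section CommRing

variable {σ R ι : Type*} [CommRing R] (i : σ)

theorem totalDegree_X_sub_C_le (r : R) : (X i - C r : MvPolynomial σ R).totalDegree ≤ 1 :=
  (totalDegree_sub_C_le _ _).trans (isHomogeneous_X R i).totalDegree_le

variable (s : Finset ι) (a : ι → R)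

theorem totalDegree_prod_X_sub_C_le :
    (∏ j ∈ s, (X i - C (a j)) : MvPolynomial σ R).totalDegree ≤ s.card :=
  (totalDegree_finsetProd _ _).trans <| by
    simpa using Finset.sum_le_sum fun j _ => totalDegree_X_sub_C_le i (a j)

theorem homogeneousComponent_prod_X_sub_C :
    homogeneousComponent s.card (∏ j ∈ s, (X i - C (a j)) : MvPolynomial σ R) =
      X i ^ s.card := by
  have hlin (r : R) : homogeneousComponent 1 (X i - C r : MvPolynomial σ R) = X i := by
    simp [homogeneousComponent_of_mem (isHomogeneous_X R i),
      homogeneousComponent_of_mem (isHomogeneous_C σ r)]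
  conv_lhs => rw [Finset.card_eq_sum_ones]
  rw [homogeneousComponent_prod_of_totalDegree_le _ _ _ fun j _ => totalDegree_X_sub_C_le i (a j),
    Finset.prod_congr rfl fun j _ => hlin (a j), Finset.prod_const]

end CommRing

end MvPolynomial

theorem TEx_subset_halfSpace {a b c d : ℝ} (h₀ : d ≤ 0) (h₁ : d ≤ a * 572 + b * 286 + c * 143)
    (h₂ : d ≤ a * 390 + b * 195 + c * -585) (h₃ : d ≤ a * 495 + b * -330 + c * -165) :
    TEx ⊆ {v | d ≤ a * v 0 + b * v 1 + c * v 2} := by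
  have hlin : IsLinearMap ℝ fun v : Fin 3 → ℝ => a * v 0 + b * v 1 + c * v 2 :=
    (a • LinearMap.proj 0 + b • LinearMap.proj 1 + c • LinearMap.proj 2 :
      (Fin 3 → ℝ) →ₗ[ℝ] ℝ).isLinear
  refine convexHull_min ?_ (convex_halfSpace_ge hlin d)
  simp only [Set.insert_subset_iff, Set.singleton_subset_iff]
  refine ⟨?_, ?_, ?_, ?_⟩ <;> simp <;> linarith

theorem facet_inequalities_of_castR_mem_TEx {p : Fin 3 → ℤ} (hp : castR p ∈ TEx) :
    0 ≤ p 0 - 2 * p 1 ∧ 0 ≤ p 1 - 2 * p 2 ∧ 0 ≤ p 0 + p 1 + p 2 ∧ 4 * p 0 - p 2 ≤ 2145 := by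
  have h₁ := TEx_subset_halfSpace (a := 1) (b := -2) (c := 0) (d := 0)
    (by norm_num) (by norm_num) (by norm_num) (by norm_num) hp
  have h₂ := TEx_subset_halfSpace (a := 0) (b := 1) (c := -2) (d := 0)
    (by norm_num) (by norm_num) (by norm_num) (by norm_num) hp
  have h₃ := TEx_subset_halfSpace (a := 1) (b := 1) (c := 1) (d := 0)
    (by norm_num) (by norm_num) (by norm_num) (by norm_num) hp
  have h₄ := TEx_subset_halfSpace (a := -4) (b := 0) (c := 1) (d := -2145)
    (by norm_num) (by norm_num) (by norm_num) (by norm_num) hp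
  simp only [Set.mem_ofPred_eq, castR] at h₁ h₂ h₃ h₄
  refine ⟨?_, ?_, ?_, ?_⟩ <;> rify <;> linarith

theorem castR_mem_TEx_cases {p : Fin 3 → ℤ} (hp : castR p ∈ TEx) :
    (2 ≤ p 0 ∧ p 0 ≤ 571) ∨ (p 0 = 0 ∧ p 1 = 0) ∨ (p 0 = 1 ∧ p 1 = 0) ∨
      (p 0 = 572 ∧ p 1 = 286) := by
  have := facet_inequalities_of_castR_mem_TEx hp
  omega

/-- There is a polynomial `F ∈ ℚ[x,y,z]` of total degree `572` with degree-`572`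
homogeneous component `x^572` vanishing at all lattice points of the tetrahedron `TEx`. -/
theorem tetrahedron_hypersurface :
    ∃ F : MvPolynomial (Fin 3) ℚ, F.totalDegree = 572 ∧
      MvPolynomial.homogeneousComponent 572 F = (MvPolynomial.X 0) ^ 572 ∧
      ∀ p : Fin 3 → ℤ, castR p ∈ TEx →
        MvPolynomial.eval (fun i => (p i : ℚ)) F = 0 := by
  set Q : MvPolynomial (Fin 3) ℚ := X 0 ^ 2 - X 0 - C 1142 * X 1
  set P : MvPolynomial (Fin 3) ℚ := ∏ j ∈ Finset.Icc (2 : ℤ) 571, (X 0 - C (j : ℚ))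
  have hcard : (Finset.Icc (2 : ℤ) 571).card = 570 := by simp
  have hQ : Q.totalDegree ≤ 2 := by
    refine (totalDegree_sub _ _).trans (max_le ((totalDegree_sub _ _).trans (max_le ?_ ?_)) ?_)
    · exact (isHomogeneous_X_pow 0 2).totalDegree_le
    · exact (isHomogeneous_X ℚ 0).totalDegree_le.trans one_le_two
    · exact (isHomogeneous_C_mul_X 1142 1).totalDegree_le.trans one_le_two
  have hP : P.totalDegree ≤ 570 := hcard ▸ totalDegree_prod_X_sub_C_le _ _ _
  have hQlead : homogeneousComponent 2 Q = X 0 ^ 2 := by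
    simp [Q, homogeneousComponent_of_mem (isHomogeneous_X ℚ _),
      homogeneousComponent_of_mem (isHomogeneous_X_pow (R := ℚ) (0 : Fin 3) 2)]
  have hlead : homogeneousComponent 572 (Q * P) = X 0 ^ 572 := by
    rw [show 572 = 2 + 570 from rfl, homogeneousComponent_mul_of_totalDegree_le hQ hP, ← hcard,
      homogeneousComponent_prod_X_sub_C, hcard, hQlead, ← pow_add]
  refine ⟨Q * P, totalDegree_eq_of_homogeneousComponent_ne_zero
    ((totalDegree_mul _ _).trans (add_le_add hQ hP)) (hlead ▸ pow_ne_zero _ (X_ne_zero _)),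
    hlead, fun p hp => ?_⟩
  rcases castR_mem_TEx_cases hp with ⟨h₁, h₂⟩ | ⟨h₀, h₁⟩ | ⟨h₀, h₁⟩ | ⟨h₀, h₁⟩
  · rw [map_mul, map_prod, Finset.prod_eq_zero (Finset.mem_Icc.mpr ⟨h₁, h₂⟩) (by simp), mul_zero]
  all_goals norm_num [Q, h₀, h₁]
end
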